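/- arXiv:math/0409532 — 5 statements merged into one kernel-verified Lean document; each statement's English description precedes it below -/
import Mathlib

section
/- (Inclusion Lemma) Let U and V be 𝔽_p[G]-submodules of an 𝔽_p[G]-module W. Suppose that (U+V)^G ⊆ U and that for each w ∈ (U+V) ∖ (U+V)^G there exists u ∈ U such that (σ-1)^{l(w)-1}(w) = N(u). Then V ⊆ U. -/
/-!
Since `σ` generates `G`, the algebra `𝔽_p[G]` is generated by `τ = σ - 1`, so the cyclic
submodule generated by `w` is spanned by the `τ^i w`; in particular `l(w) ≤ k` whenever
`τ^k w = 0`, and `τ^{p^n} = (σ^{p^n} - 1) = 0` in characteristic `p`. Now induct on `l(w)`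
for `w ∈ U + V`: if `w ∉ U`, then `w` is not fixed, so `τ^{l-1} w = τ^{p^n-1} u` with
`u ∈ U`, and `w' = w - τ^{p^n-l} u ∈ U + V` is killed by `τ^{l-1}`. Thus `l(w') < l(w)`,
so `w' ∈ U` and hence `w ∈ U`.
-/

open Module Submodule Polynomial

section CyclicSpan

variable {K R W : Type*} [Field K] [CommRing R] [Algebra K R] [AddCommGroup W] [Module R W]
  [Module K W] [IsScalarTower K R W] {τ : R}

theorem smul_mem_span_range_pow_smul (hτ : Algebra.adjoin K {τ} = ⊤) (r : R) (x : W) :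
    r • x ∈ span K (Set.range fun i : ℕ => τ ^ i • x) := by
  obtain ⟨f, rfl⟩ : ∃ f : K[X], aeval τ f = r := by
    rw [← AlgHom.mem_range, ← Algebra.adjoin_singleton_eq_range_aeval, hτ]; trivial
  rw [aeval_eq_sum_range, Finset.sum_smul]
  exact sum_mem fun i _ => by rw [smul_assoc]; exact smul_mem _ _ (subset_span ⟨i, rfl⟩)

theorem restrictScalars_span_singleton_le (hτ : Algebra.adjoin K {τ} = ⊤) {x : W} {k : ℕ}
    (hk : τ ^ k • x = 0) :
    (span R {x}).restrictScalars K ≤ span K (Set.range fun i : Fin k => τ ^ (i : ℕ) • x) := by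
  intro y hy
  obtain ⟨r, rfl⟩ := mem_span_singleton.1 hy
  refine span_le.2 ?_ (smul_mem_span_range_pow_smul hτ r x)
  rintro _ ⟨i, rfl⟩
  rcases lt_or_ge i k with hi | hi
  · exact subset_span ⟨⟨i, hi⟩, rfl⟩
  · change τ ^ i • x ∈ _
    rw [← Nat.sub_add_cancel hi, pow_add, mul_smul, hk, smul_zero]
    exact zero_mem _

theorem finiteDimensional_span_singleton_of_pow_smul_eq_zero (hτ : Algebra.adjoin K {τ} = ⊤)
    {x : W} {k : ℕ} (hk : τ ^ k • x = 0) : FiniteDimensional K (span R {x}) :=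
  have := FiniteDimensional.span_of_finite K (Set.finite_range fun i : Fin k => τ ^ (i : ℕ) • x)
  have := finiteDimensional_of_le (restrictScalars_span_singleton_le hτ hk)
  (((span R {x}).restrictScalarsEquiv K R W).restrictScalars K).finiteDimensional

theorem finrank_span_singleton_le_of_pow_smul_eq_zero (hτ : Algebra.adjoin K {τ} = ⊤)
    {x : W} {k : ℕ} (hk : τ ^ k • x = 0) : finrank K (span R {x}) ≤ k :=
  have := FiniteDimensional.span_of_finite K (Set.finite_range fun i : Fin k => τ ^ (i : ℕ) • x)
  calc finrank K (span R {x}) = finrank K ((span R {x}).restrictScalars K) :=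
        (((span R {x}).restrictScalarsEquiv K R W).restrictScalars K).finrank_eq.symm
    _ ≤ finrank K (span K (Set.range fun i : Fin k => τ ^ (i : ℕ) • x)) :=
        finrank_mono (restrictScalars_span_singleton_le hτ hk)
    _ ≤ k := (finrank_range_le_card _).trans_eq (Fintype.card_fin k)

theorem finrank_span_singleton_pos {x : W} [FiniteDimensional K (span R {x})] (hx : x ≠ 0) :
    0 < finrank K (span R {x}) :=
  finrank_pos_iff_exists_ne_zero.2 ⟨⟨x, mem_span_singleton_self x⟩, by simpa using hx⟩

theorem le_of_forall_notMem_exists_pow_smul_eq {m : ℕ} (hτ : Algebra.adjoin K {τ} = ⊤) (hτm : τ ^ m = 0) {U V : Submodule R W}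
    (h : ∀ w ∈ U ⊔ V, w ∉ U →
      ∃ u ∈ U, τ ^ (finrank K (span R {w}) - 1) • w = τ ^ (m - 1) • u) :
    V ≤ U := by
  suffices ∀ l, ∀ w ∈ U ⊔ V, finrank K (span R {w}) = l → w ∈ U from
    fun v hv => this _ v (mem_sup_right hv) rfl
  intro l
  induction l using Nat.strong_induction_on with
  | _ l ih =>
  intro w hw hl
  by_contra hwU
  obtain ⟨u, hu, hwu⟩ := h w hw hwU
  have hwm : τ ^ m • w = 0 := by rw [hτm, zero_smul]
  have := finiteDimensional_span_singleton_of_pow_smul_eq_zero hτ hwm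
  have hlm := finrank_span_singleton_le_of_pow_smul_eq_zero hτ hwm
  have hl_pos : 0 < l := hl ▸ finrank_span_singleton_pos fun hw0 => hwU (hw0 ▸ zero_mem U)
  rw [hl] at hwu hlm
  set w' := w - τ ^ (m - l) • u
  have hw'_mem : w' ∈ U ⊔ V := sub_mem hw (mem_sup_left (U.smul_mem _ hu))
  have hw'_ann : τ ^ (l - 1) • w' = 0 := by
    rw [smul_sub, ← mul_smul, ← pow_add, show l - 1 + (m - l) = m - 1 by omega, hwu, sub_self]
  have hw'_len : finrank K (span R {w'}) < l :=
    (finrank_span_singleton_le_of_pow_smul_eq_zero hτ hw'_ann).trans_lt (by omega)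
  have hw'U : w' ∈ U := ih _ hw'_len w' hw'_mem rfl
  exact hwU (by simpa [w'] using U.add_mem hw'U (U.smul_mem (τ ^ (m - l)) hu))

end CyclicSpan

namespace MonoidAlgebra

theorem adjoin_of_sub_one_eq_top {k G : Type*} [CommRing k] [CommGroup G] [Finite G] {σ : G}
    (hσ : ∀ g, g ∈ Subgroup.zpowers σ) : Algebra.adjoin k {of k G σ - 1} = ⊤ := by
  have hσ_mem : of k G σ ∈ Algebra.adjoin k {of k G σ - 1} := by
    simpa using add_mem (Algebra.self_mem_adjoin_singleton k (of k G σ - 1))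
      (one_mem (Algebra.adjoin k {of k G σ - 1}))
  refine eq_top_iff.2 fun r _ => r.induction_on (fun g => ?_) (fun _ _ => add_mem)
    (fun c _ hr => Subalgebra.smul_mem _ hr c)
  obtain ⟨j, rfl⟩ := mem_powers_iff_mem_zpowers.2 (hσ g)
  simpa using pow_mem hσ_mem j

theorem of_sub_one_pow_char_pow_eq_zero {k G : Type*} [CommRing k] [Monoid G] (p : ℕ)
    [Fact p.Prime] [CharP k p] {σ : G} {n : ℕ} (hσ : σ ^ p ^ n = 1) :
    (of k G σ - 1) ^ p ^ n = 0 := by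
  have : CharP (MonoidAlgebra k G) p :=
    charP_of_injective_ringHom (f := singleOneRingHom) single_right_injective p
  rw [sub_pow_char_pow_of_commute p n (Commute.one_right _), ← map_pow, hσ, map_one, one_pow,
    sub_self]

end MonoidAlgebra

theorem statement_6_general
    (p n : ℕ) (hp : p.Prime)
    (G : Type) [CommGroup G] (σ : G)
    (hσ : ∀ g : G, g ∈ Subgroup.zpowers σ) (hG : Nat.card G = p ^ n)
    (W : Type) [AddCommGroup W] [Module (MonoidAlgebra (ZMod p) G) W]
    [Module (ZMod p) W] [IsScalarTower (ZMod p) (MonoidAlgebra (ZMod p) G) W]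
    (U V : Submodule (MonoidAlgebra (ZMod p) G) W)
    (hfix : ∀ x ∈ U ⊔ V, (∀ g : G, MonoidAlgebra.of (ZMod p) G g • x = x) → x ∈ U)
    (hnorm : ∀ w ∈ U ⊔ V, ¬ (∀ g : G, MonoidAlgebra.of (ZMod p) G g • w = w) →
      ∃ u ∈ U,
        (MonoidAlgebra.of (ZMod p) G σ - 1) ^
            (Module.finrank (ZMod p)
              (Submodule.span (MonoidAlgebra (ZMod p) G) {w}) - 1) • w =
          (MonoidAlgebra.of (ZMod p) G σ - 1) ^ (p ^ n - 1) • u) :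
    V ≤ U := by
  have : Fact p.Prime := ⟨hp⟩
  have : Finite G := Nat.finite_of_card_ne_zero (hG ▸ pow_ne_zero n hp.ne_zero)
  have hσ_pow : σ ^ p ^ n = 1 := hG ▸ pow_card_eq_one'
  exact le_of_forall_notMem_exists_pow_smul_eq (MonoidAlgebra.adjoin_of_sub_one_eq_top hσ)
    (MonoidAlgebra.of_sub_one_pow_char_pow_eq_zero p hσ_pow)
    fun w hw hwU => hnorm w hw fun hfixed => hwU (hfix w hw hfixed)

/-- **Inclusion Lemma.** Let `G` be cyclic of order `p^n` with generator `σ`, and let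
`U`, `V` be `𝔽_p[G]`-submodules of `W`.  If `(U+V)^G ⊆ U` and for each
`w ∈ (U+V) \\ (U+V)^G` there is `u ∈ U` with `(σ-1)^{l(w)-1} w = N u`, then `V ⊆ U`. -/
theorem statement_6
    (p n : ℕ) (hp : p.Prime) (hn : 1 ≤ n)
    (G : Type) [CommGroup G] (σ : G)
    (hσ : ∀ g : G, g ∈ Subgroup.zpowers σ) (hG : Nat.card G = p ^ n)
    (W : Type) [AddCommGroup W] [Module (MonoidAlgebra (ZMod p) G) W]
    [Module (ZMod p) W] [IsScalarTower (ZMod p) (MonoidAlgebra (ZMod p) G) W]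
    (U V : Submodule (MonoidAlgebra (ZMod p) G) W)
    (hfix : ∀ x ∈ U ⊔ V, (∀ g : G, MonoidAlgebra.of (ZMod p) G g • x = x) → x ∈ U)
    (hnorm : ∀ w ∈ U ⊔ V, ¬ (∀ g : G, MonoidAlgebra.of (ZMod p) G g • w = w) →
      ∃ u ∈ U,
        (MonoidAlgebra.of (ZMod p) G σ - 1) ^
            (Module.finrank (ZMod p)
              (Submodule.span (MonoidAlgebra (ZMod p) G) {w}) - 1) • w =
          (MonoidAlgebra.of (ZMod p) G σ - 1) ^ (p ^ n - 1) • u) :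
    V ≤ U :=
  statement_6_general p n hp G σ hσ hG W U V hfix hnorm
end

section
/- (Free Complement Lemma) Let V ⊆ U be 𝔽_p[G]-modules, with both V and U free as 𝔽_p[G]-modules (of possibly infinite rank). Then there exists a free 𝔽_p[G]-submodule Ṽ of U such that U = V ⊕ Ṽ. -/
/-!
Since `G = ⟨σ⟩` is a `p`-group, `t = σ - 1` is nilpotent in `𝔽_p[G]` and generates it as an
`𝔽_p`-algebra, so every nonzero element of `𝔽_p[G]` is a unit times a power of `t`. Hence
`𝔽_p[G]` is a local principal ideal ring with nilpotent maximal ideal `(t)`, in which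
`ann a ⊆ ann b` forces `a ∣ b`. By Baer's criterion this makes free modules injective, so `V` is a
direct summand of `U`. The complement is projective, hence flat, and a flat module over a local
ring with nilpotent maximal ideal is free: a lift of a basis modulo the maximal ideal is linearly
independent by flatness and spans by Nakayama's lemma.
-/

open IsLocalRing Polynomial

theorem Submodule.eq_top_of_sup_smul_eq_top {R M : Type*} [CommRing R] [AddCommGroup M]
    [Module R M] {I : Ideal R} (hI : IsNilpotent I) {N : Submodule R M}
    (h : N ⊔ I • ⊤ = ⊤) : N = ⊤ := by
  have key : ∀ k : ℕ, N ⊔ I ^ k • ⊤ = ⊤ := by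
    intro k
    induction k with
    | zero => simp
    | succ k ih =>
      refine top_le_iff.mp ?_
      calc ⊤ = N ⊔ I ^ k • (N ⊔ I • ⊤) := by rw [h, ih]
        _ = N ⊔ (I ^ k • N ⊔ I ^ (k + 1) • ⊤) := by rw [smul_sup, pow_succ, mul_smul]
        _ ≤ N ⊔ I ^ (k + 1) • ⊤ := sup_le le_sup_left (sup_le_sup_right smul_le_right _)
  obtain ⟨k, hk⟩ := hI
  simpa [hk] using key k

open TensorProduct in
theorem Module.free_of_flat_of_isNilpotent_maximalIdeal {R M : Type*} [CommRing R]
    [IsLocalRing R] [AddCommGroup M] [Module R M] [Module.Flat R M]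
    (h : IsNilpotent (maximalIdeal R)) : Module.Free R M := by
  obtain ⟨ι, b⟩ :=
    (Module.Free.of_divisionRing (ResidueField R) (ResidueField R ⊗[R] M)).exists_basis
  let mk₁ : M →ₗ[R] ResidueField R ⊗[R] M := TensorProduct.mk R (ResidueField R) M 1
  choose v hv using fun i => TensorProduct.mk_surjective R M _ residue_surjective (b i)
  have hli : LinearIndependent R v :=
    IsLocalRing.linearIndependent_of_flat v
      (by rw [show mk₁ ∘ v = ⇑b from funext hv]; exact b.linearIndependent)
  have hmap : (Submodule.span R (Set.range v)).map mk₁ = ⊤ := by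
    rw [Submodule.map_span, ← Submodule.restrictScalars_span R (ResidueField R) residue_surjective,
      Submodule.restrictScalars_eq_top_iff, ← b.span_eq, ← Set.range_comp]
    simp only [Function.comp_def, mk₁, hv]
  have hker : LinearMap.ker mk₁ = maximalIdeal R • ⊤ := LinearMap.ker_tensorProductMk M
  have hspan : Submodule.span R (Set.range v) ⊔ maximalIdeal R • ⊤ = ⊤ := by
    rw [← hker, ← Submodule.comap_map_eq, hmap, Submodule.comap_top]
  exact Module.Free.of_basis (.mk hli (Submodule.eq_top_of_sup_smul_eq_top h hspan).ge)

section ChainRing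

variable {R : Type*} [CommRing R] {t : R}

theorem dvd_of_not_isUnit_of_chain (hchain : ∀ r : R, r ≠ 0 → ∃ u i, IsUnit u ∧ r = u * t ^ i)
    {r : R} (hr : ¬IsUnit r) : t ∣ r := by
  rcases eq_or_ne r 0 with rfl | hr0
  · exact dvd_zero t
  obtain ⟨u, _ | i, hu, rfl⟩ := hchain r hr0
  · exact absurd (by simpa using hu) hr
  · exact dvd_mul_of_dvd_right (dvd_pow_self t i.succ_ne_zero) u

theorem isLocalRing_of_chain [Nontrivial R] (ht : IsNilpotent t)
    (hchain : ∀ r : R, r ≠ 0 → ∃ u i, IsUnit u ∧ r = u * t ^ i) : IsLocalRing R :=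
  .of_nonunits_add fun a b ha hb => by
    obtain ⟨c, hc⟩ := dvd_add (dvd_of_not_isUnit_of_chain hchain ha)
      (dvd_of_not_isUnit_of_chain hchain hb)
    rw [mem_nonunits_iff, hc]
    exact ((Commute.all t c).isNilpotent_mul_right ht).not_isUnit

theorem isNilpotent_maximalIdeal_of_chain [IsLocalRing R] (ht : IsNilpotent t)
    (hchain : ∀ r : R, r ≠ 0 → ∃ u i, IsUnit u ∧ r = u * t ^ i) :
    IsNilpotent (maximalIdeal R) := by
  obtain ⟨k, hk⟩ := ht
  refine ⟨k, le_bot_iff.mp ?_⟩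
  calc maximalIdeal R ^ k ≤ Ideal.span {t} ^ k :=
        Ideal.pow_right_mono (fun r hr => Ideal.mem_span_singleton.mpr
          (dvd_of_not_isUnit_of_chain hchain hr)) k
    _ = ⊥ := by rw [Ideal.span_singleton_pow, hk, Ideal.span_singleton_eq_bot]

theorem Module.free_of_flat_of_chain {M : Type*} [Nontrivial R] (ht : IsNilpotent t)
    (hchain : ∀ r : R, r ≠ 0 → ∃ u i, IsUnit u ∧ r = u * t ^ i)
    [AddCommGroup M] [Module R M] [Module.Flat R M] : Module.Free R M :=
  have := isLocalRing_of_chain ht hchain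
  free_of_flat_of_isNilpotent_maximalIdeal (isNilpotent_maximalIdeal_of_chain ht hchain)

theorem dvd_of_forall_mul_eq_zero_of_chain (ht : IsNilpotent t)
    (hchain : ∀ r : R, r ≠ 0 → ∃ u i, IsUnit u ∧ r = u * t ^ i) {a b : R}
    (h : ∀ c, c * a = 0 → c * b = 0) : a ∣ b := by
  rcases eq_or_ne a 0 with rfl | ha
  · simpa using h 1 (mul_zero 1)
  rcases eq_or_ne b 0 with rfl | hb
  · exact dvd_zero a
  obtain ⟨u, i, hu, rfl⟩ := hchain a ha
  obtain ⟨v, k, hv, rfl⟩ := hchain b hb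
  set m := nilpotencyClass t
  have him : i ≤ m := by
    by_contra! him
    exact ha (by rw [pow_eq_zero_of_le him.le (pow_nilpotencyClass ht), mul_zero])
  -- `t ^ (m - i)` kills `a`, so it kills `b`, which bounds the exponent of `b` from below.
  have hkill : t ^ (m - i) * (v * t ^ k) = 0 :=
    h _ (by rw [mul_left_comm, ← pow_add, Nat.sub_add_cancel him, pow_nilpotencyClass ht, mul_zero])
  have hzero : t ^ (m - i + k) = 0 := by
    rwa [mul_left_comm, hv.mul_right_eq_zero, ← pow_add] at hkill
  have hik : i ≤ k := by
    have : m ≤ m - i + k := Nat.sInf_le hzero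
    omega
  exact hu.mul_left_dvd.mpr (hv.dvd_mul_left.mpr (pow_dvd_pow t hik))

end ChainRing

section SelfInjective

variable {R M : Type*} [CommRing R] [AddCommGroup M] [Module R M] [Module.Free R M]

theorem Module.Free.exists_smul_eq (hR : ∀ a b : R, (∀ c, c * a = 0 → c * b = 0) → a ∣ b)
    {a : R} {y : M} (hy : ∀ c, c * a = 0 → c • y = 0) : ∃ x : M, a • x = y := by
  let e := Module.Free.chooseBasis R M
  have hcoord : ∀ i, a ∣ e.repr y i := fun i =>
    hR _ _ fun c hc => by rw [← smul_eq_mul, ← Finsupp.smul_apply, ← map_smul, hy c hc]; simp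
  choose r hr using hcoord
  refine ⟨∑ i ∈ (e.repr y).support, r i • e i, ?_⟩
  calc a • ∑ i ∈ (e.repr y).support, r i • e i = ∑ i ∈ (e.repr y).support, e.repr y i • e i := by
        simp only [Finset.smul_sum, smul_smul, ← hr]
    _ = y := e.linearCombination_repr y

theorem Module.Baer.of_free [IsPrincipalIdealRing R]
    (hR : ∀ a b : R, (∀ c, c * a = 0 → c * b = 0) → a ∣ b) : Module.Baer R M := by
  intro I g
  obtain ⟨a, rfl⟩ := (IsPrincipalIdealRing.principal I).principal
  have ha : a ∈ Ideal.span {a} := Ideal.mem_span_singleton_self a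
  obtain ⟨x, hx⟩ := Module.Free.exists_smul_eq hR (y := g ⟨a, ha⟩) fun c hc => by
    rw [← map_smul, show c • (⟨a, ha⟩ : Ideal.span {a}) = 0 from Subtype.ext hc, map_zero]
  refine ⟨LinearMap.toSpanSingleton R M x, fun z hz => ?_⟩
  obtain ⟨c, rfl⟩ := Ideal.mem_span_singleton'.mp hz
  rw [LinearMap.toSpanSingleton_apply, mul_smul, hx, ← map_smul]
  rfl

end SelfInjective

theorem exists_isUnit_mul_pow_of_aeval_surjective {k B : Type*} [Field k] [CommRing B]
    [Algebra k B] {t : B} (ht : IsNilpotent t)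
    (hsurj : Function.Surjective (aeval (R := k) t)) (r : B) (hr : r ≠ 0) :
    ∃ u i, IsUnit u ∧ r = u * t ^ i := by
  obtain ⟨P, rfl⟩ := hsurj r
  have hP : P ≠ 0 := by rintro rfl; exact hr (map_zero _)
  obtain ⟨Q, hPQ, hQ⟩ := P.exists_eq_pow_rootMultiplicity_mul_and_not_dvd hP 0
  generalize rootMultiplicity 0 P = i at hPQ
  rw [map_zero, sub_zero] at hPQ hQ
  rw [X_dvd_iff] at hQ
  subst hPQ
  refine ⟨aeval t Q, i, ?_, by rw [map_mul, map_pow, aeval_X, mul_comm]⟩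
  refine isUnit_aeval_of_isUnit_aeval_of_isNilpotent_sub (b := 0) ?_ (by rwa [sub_zero])
  rw [← coeff_zero_eq_aeval_zero']
  exact (isUnit_iff_ne_zero.mpr hQ).map _

theorem isNilpotent_sub_one_of_pow_eq_one {A : Type*} [CommRing A] (p : ℕ) [Fact p.Prime]
    [CharP A p] {x : A} {n : ℕ} (hx : x ^ p ^ n = 1) : IsNilpotent (x - 1) :=
  ⟨p ^ n, by rw [sub_pow_char_pow, hx, one_pow, sub_self]⟩

theorem MonoidAlgebra.aeval_of_sub_one_surjective {k G : Type*} [CommRing k] [CommGroup G]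
    [Finite G] {σ : G} (hσ : ∀ g : G, g ∈ Subgroup.zpowers σ) :
    Function.Surjective (aeval (R := k) (of k G σ - 1)) := by
  have hσS : of k G σ ∈ (aeval (R := k) (of k G σ - 1)).range := ⟨X + 1, by simp⟩
  intro x
  refine (AlgHom.mem_range _).mp ?_
  induction x using MonoidAlgebra.induction_on with
  | of g =>
    obtain ⟨i, rfl⟩ := mem_powers_iff_mem_zpowers.mpr (hσ g)
    simpa only [map_pow] using Subalgebra.pow_mem _ hσS i
  | add x y hx hy => exact Subalgebra.add_mem _ hx hy
  | smul c x hx => exact Subalgebra.smul_mem _ hx c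

theorem statement_8_general
    (p n : ℕ) (hp : p.Prime)
    (G : Type) [CommGroup G] (σ : G)
    (hσ : ∀ g : G, g ∈ Subgroup.zpowers σ) (hG : Nat.card G = p ^ n)
    (U : Type) [AddCommGroup U] [Module (MonoidAlgebra (ZMod p) G) U]
    [Module.Free (MonoidAlgebra (ZMod p) G) U]
    (V : Submodule (MonoidAlgebra (ZMod p) G) U)
    (hV : Module.Free (MonoidAlgebra (ZMod p) G) V) :
    ∃ V' : Submodule (MonoidAlgebra (ZMod p) G) U,
      Module.Free (MonoidAlgebra (ZMod p) G) V' ∧ IsCompl V V' := by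
  have : Fact p.Prime := ⟨hp⟩
  have : Finite G := Nat.finite_of_card_ne_zero (by rw [hG]; exact pow_ne_zero _ hp.ne_zero)
  have : CharP (MonoidAlgebra (ZMod p) G) p := charP_of_injective_algebraMap' (ZMod p) p
  set t := MonoidAlgebra.of (ZMod p) G σ - 1
  have hsurj := MonoidAlgebra.aeval_of_sub_one_surjective (k := ZMod p) hσ
  have ht : IsNilpotent t := isNilpotent_sub_one_of_pow_eq_one p (n := n)
    (by rw [← map_pow, ← hG, pow_card_eq_one', map_one])
  have hchain := exists_isUnit_mul_pow_of_aeval_surjective ht hsurj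
  have := IsPrincipalIdealRing.of_surjective _ hsurj
  have : Module.Injective (MonoidAlgebra (ZMod p) G) V :=
    (Module.Baer.of_free fun _ _ => dvd_of_forall_mul_eq_zero_of_chain ht hchain).injective
  obtain ⟨π, hπ⟩ := Module.Injective.out V.subtype V.injective_subtype LinearMap.id
  have hcompl : IsCompl V (LinearMap.ker π) := LinearMap.isCompl_of_proj hπ
  have : Module.Projective (MonoidAlgebra (ZMod p) G) (LinearMap.ker π) :=
    .of_split _ _ (Submodule.projectionOnto_comp_subtype hcompl.symm)
  exact ⟨LinearMap.ker π, Module.free_of_flat_of_chain ht hchain, hcompl⟩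

/-- **Free Complement Lemma.** Let `G` be cyclic of order `p^n`.  If `V ⊆ U` are free
`𝔽_p[G]`-modules, then there is a free `𝔽_p[G]`-submodule `Ṽ` of `U` with `U = V ⊕ Ṽ`. -/
theorem statement_8
    (p n : ℕ) (hp : p.Prime) (hn : 1 ≤ n)
    (G : Type) [CommGroup G] (σ : G)
    (hσ : ∀ g : G, g ∈ Subgroup.zpowers σ) (hG : Nat.card G = p ^ n)
    (U : Type) [AddCommGroup U] [Module (MonoidAlgebra (ZMod p) G) U]
    [Module.Free (MonoidAlgebra (ZMod p) G) U]
    (V : Submodule (MonoidAlgebra (ZMod p) G) U)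
    (hV : Module.Free (MonoidAlgebra (ZMod p) G) V) :
    ∃ V' : Submodule (MonoidAlgebra (ZMod p) G) U,
      Module.Free (MonoidAlgebra (ZMod p) G) V' ∧ IsCompl V V' :=
  statement_8_general p n hp G σ hσ hG U V hV
end

section
/- (Subfield Generators) Suppose ξ_p ∈ F. Then one may choose elements a_i ∈ K_i^× for 0 ≤ i < n such that K_{i+1} = K_i(p-th root of a_i) for all 0 ≤ i < n, and N_{K_i/K_j}(a_i) = a_j for all 0 ≤ j < i < n. -/
/-!
Put `τ = σ ^ p ^ (n - 1)`, an automorphism of order `p`. Its minimal polynomial is `X ^ p - 1`,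
so `τ` has an eigenvector `α` with eigenvalue `ζ`. The partial orbit products
`r i = ∏ u < p ^ (n - 1 - i), σ ^ (p ^ i * u) α` telescope to `σ ^ p ^ i (r i) = ζ • r i`.
Since `K_i` is the fixed field of `σ ^ p ^ i`, this puts `a i = r i ^ p` in `K_i` and `r i` in
`K_{i+1} \ K_i`, which forces `K_{i+1} = K_i(r i)` as `[K_{i+1} : K_i] = p`. The extension
`K_i / K_j` is cyclic, generated by `σ ^ p ^ j`, so its norm is an orbit product of length
`p ^ (i - j)`, and orbit products compose: the norm of `r i` is `r j`.
-/

namespace PC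

/-- The subgroup of `p`-th powers of units of `K`. -/
def pPow (p : ℕ) (K : Type) [Field K] : Subgroup Kˣ :=
  (powMonoidHom p : Kˣ →* Kˣ).range

/-- `J(K) = K^×/K^{×p}`, as a multiplicative abelian group. -/
abbrev Jgrp (p : ℕ) (K : Type) [Field K] := Kˣ ⧸ pPow p K

/-- The class `[u] ∈ J` of a unit `u` of `K`. -/
def cls (p : ℕ) {K : Type} [Field K] (u : Kˣ) : Jgrp p K := QuotientGroup.mk u

lemma Jgrp_pow (p : ℕ) {K : Type} [Field K] (x : Jgrp p K) : x ^ p = 1 := by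
  induction x using QuotientGroup.induction_on with
  | H u =>
    show ((QuotientGroup.mk' (pPow p K)) u) ^ p = 1
    rw [← map_pow, QuotientGroup.mk'_apply, QuotientGroup.eq_one_iff]
    exact ⟨u, rfl⟩

/-- The action of a Galois automorphism on `J`. -/
noncomputable def galJ (p : ℕ) {F K : Type} [Field F] [Field K] [Algebra F K]
    (σ : K ≃ₐ[F] K) : Jgrp p K →* Jgrp p K :=
  QuotientGroup.map (pPow p K) (pPow p K) (Units.map (σ : K →* K)) (by
    intro x hx
    rw [Subgroup.mem_comap]
    obtain ⟨v, rfl⟩ := hx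
    exact ⟨Units.map (σ : K →* K) v, by simp [powMonoidHom, map_pow]⟩)

/-- `σ - 1` as an endomorphism of `J` (multiplicatively, `x ↦ σ(x)·x⁻¹`). -/
noncomputable def sub1 (p : ℕ) {F K : Type} [Field F] [Field K] [Algebra F K]
    (σ : K ≃ₐ[F] K) : Jgrp p K →* Jgrp p K :=
  MonoidHom.mk' (fun x => galJ p σ x / x) (by
    intro a b
    show galJ p σ (a * b) / (a * b) = galJ p σ a / a * (galJ p σ b / b)
    rw [map_mul]
    exact mul_div_mul_comm (galJ p σ a) (galJ p σ b) a b)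

/-- `(σ - 1)^k` as an endomorphism of `J`. -/
noncomputable def sub1pow (p : ℕ) {F K : Type} [Field F] [Field K] [Algebra F K]
    (σ : K ≃ₐ[F] K) (k : ℕ) : Jgrp p K →* Jgrp p K :=
  Nat.rec (MonoidHom.id _) (fun _ ih => (sub1 p σ).comp ih) k

/-- The norm endomorphism of `J`, induced by `N_{K/F}` followed by the inclusion of `F` in `K`. -/
noncomputable def normOp (p : ℕ) (F : Type) {K : Type} [Field F] [Field K] [Algebra F K] :
    Jgrp p K →* Jgrp p K :=
  QuotientGroup.map (pPow p K) (pPow p K)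
    (Units.map ((algebraMap F K : F →* K).comp (Algebra.norm F : K →* F))) (by
      intro x hx
      rw [Subgroup.mem_comap]
      obtain ⟨v, rfl⟩ := hx
      exact ⟨Units.map ((algebraMap F K : F →* K).comp (Algebra.norm F : K →* F)) v,
        by simp [powMonoidHom, map_pow]⟩)

/-- The cyclic `𝔽_p[Gal(K/F)]`-submodule of `J` generated by an element. -/
noncomputable def cyc (p : ℕ) (F : Type) {K : Type} [Field F] [Field K] [Algebra F K]
    (x : Jgrp p K) : Subgroup (Jgrp p K) :=
  Subgroup.closure {y | ∃ τ : K ≃ₐ[F] K, galJ p τ x = y}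

/-- The subgroup of `J` fixed pointwise by a subgroup `H` of the Galois group. -/
noncomputable def fixedJ (p : ℕ) {F K : Type} [Field F] [Field K] [Algebra F K]
    (H : Subgroup (K ≃ₐ[F] K)) : Subgroup (Jgrp p K) where
  carrier := {x | ∀ τ ∈ H, galJ p τ x = x}
  one_mem' := by
    intro τ _
    exact map_one (galJ p τ)
  mul_mem' := by
    intro a b ha hb τ hτ
    rw [map_mul, ha τ hτ, hb τ hτ]
  inv_mem' := by
    intro a ha τ hτ
    rw [map_inv, ha τ hτ]

/-- The units of `K` lying in an intermediate field `E`. -/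
def unitsIn {F K : Type} [Field F] [Field K] [Algebra F K]
    (E : IntermediateField F K) : Subgroup Kˣ where
  carrier := {u | (u : K) ∈ E}
  one_mem' := by
    show ((1 : Kˣ) : K) ∈ E
    rw [Units.val_one]
    exact one_mem E
  mul_mem' := by
    intro a b ha hb
    show ((a * b : Kˣ) : K) ∈ E
    rw [Units.val_mul]
    exact mul_mem ha hb
  inv_mem' := by
    intro u hu
    show ((u⁻¹ : Kˣ) : K) ∈ E
    rw [Units.val_inv_eq_inv_val]
    exact inv_mem hu

/-- `[E^×] ⊆ J` : the classes of units of the intermediate field `E`. -/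
noncomputable def clsOf (p : ℕ) {F K : Type} [Field F] [Field K] [Algebra F K]
    (E : IntermediateField F K) : Subgroup (Jgrp p K) :=
  (unitsIn E).map (QuotientGroup.mk' (pPow p K))

/-- `[K_m^×]` for `m ∈ {-∞, 0, 1, 2, ...}`, with `[K_{-∞}^×] = {1}`. -/
noncomputable def clsOfW (p : ℕ) {F K : Type} [Field F] [Field K] [Algebra F K]
    (Ki : ℕ → IntermediateField F K) (m : WithBot ℕ) : Subgroup (Jgrp p K) :=
  m.recBotCoe ⊥ (fun i => clsOf p (Ki i))

/-- `p^m` for `m ∈ {-∞, 0, 1, 2, ...}`, with the convention `p^{-∞} = 0`. -/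
def pPowW (p : ℕ) (m : WithBot ℕ) : ℕ := m.recBotCoe 0 (fun i => p ^ i)

/-- `m ∔ 1` : `-∞ ∔ 1 = 0` and `m ∔ 1 = m + 1` for `m ≥ 0`. -/
def succW (m : WithBot ℕ) : ℕ := m.recBotCoe 0 (fun i => i + 1)

/-- `[N_{E/F}(E^×)] ⊆ J` : classes of norms (to `F`) of units of an intermediate field `E`. -/
noncomputable def normClsOf (p : ℕ) {F K : Type} [Field F] [Field K] [Algebra F K]
    (E : IntermediateField F K) : Subgroup (Jgrp p K) :=
  Subgroup.map (QuotientGroup.mk' (pPow p K))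
    ((Units.map ((algebraMap F K : F →* K).comp (Algebra.norm F : ↥E →* F))).range)

/-- `[N_{K/F}(K^×)] ⊆ J`. -/
noncomputable def normClsTop (p : ℕ) (F K : Type) [Field F] [Field K] [Algebra F K] :
    Subgroup (Jgrp p K) :=
  Subgroup.map (QuotientGroup.mk' (pPow p K))
    ((Units.map ((algebraMap F K : F →* K).comp (Algebra.norm F : K →* F))).range)

/-- `[N_{K/E}(K^×)] ⊆ J` for an intermediate field `E` of `K/F`. -/
noncomputable def relNormCls (p : ℕ) {F K : Type} [Field F] [Field K] [Algebra F K]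
    (E : IntermediateField F K) : Subgroup (Jgrp p K) :=
  Subgroup.map (QuotientGroup.mk' (pPow p K))
    ((Units.map ((algebraMap (↥E) K : ↥E →* K).comp (Algebra.norm (↥E) : K →* ↥E))).range)

/-- `Y` is a direct sum of cyclic `𝔽_p[G]`-submodules of `J`, each of `𝔽_p`-dimension `d`. -/
noncomputable def IsCyclicSumDim (p : ℕ) (F : Type) {K : Type} [Field F] [Field K] [Algebra F K]
    (Y : Subgroup (Jgrp p K)) (d : ℕ) : Prop :=
  ∃ (ι : Type) (g : ι → Jgrp p K),
    (∀ k, Nat.card (cyc p F (g k)) = p ^ d) ∧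
    (∀ k : ι, cyc p F (g k) ⊓ (⨆ k' ∈ {k' : ι | k' ≠ k}, cyc p F (g k')) = ⊥) ∧
    Y = ⨆ k, cyc p F (g k)

/-- The "stage" predicate entering the definition of `i(K/E)` : there is `δ ∈ K^×` whose
norm class `[N_{K/E}(δ)]_E` is nontrivial and with `[δ]^{τ-1} ∈ C` for all `τ ∈ Gal(K/E)`. -/
noncomputable def Stage (p : ℕ) (E : Type) {K : Type} [Field E] [Field K] [Algebra E K]
    (C : Subgroup (Jgrp p K)) : Prop :=
  ∃ δ : Kˣ, (∀ y : E, y ^ p ≠ Algebra.norm E (δ : K)) ∧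
    ∀ τ : K ≃ₐ[E] K, cls p (Units.map (τ : K →* K) δ * δ⁻¹) ∈ C

/-- `m = i(K/F)` : the stage `m` is realized and no smaller stage is. -/
noncomputable def IsIdx (p : ℕ) {F K : Type} [Field F] [Field K] [Algebra F K]
    (Ki : ℕ → IntermediateField F K) (m : WithBot ℕ) : Prop :=
  Stage p F (clsOfW p Ki m) ∧ ∀ i : WithBot ℕ, i < m → ¬ Stage p F (clsOfW p Ki i)

/-- `δ` is an exceptional element of `K/F`, relative to `m = i(K/F)`. -/
noncomputable def IsExceptional (p : ℕ) (F : Type) {K : Type} [Field F] [Field K] [Algebra F K]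
    (Ki : ℕ → IntermediateField F K) (m : WithBot ℕ) (δ : Kˣ) : Prop :=
  (∀ y : F, y ^ p ≠ Algebra.norm F (δ : K)) ∧
    ∀ τ : K ≃ₐ[F] K, cls p (Units.map (τ : K →* K) δ * δ⁻¹) ∈ clsOfW p Ki m

open Finset Module

section OrbitProd

variable {F K : Type*} [Field F] [Field K] [Algebra F K]

def orbitProd (g : K ≃ₐ[F] K) (N : ℕ) (x : K) : K := ∏ u ∈ range N, (g ^ u) x

variable (g : K ≃ₐ[F] K) (N : ℕ)

lemma orbitProd_ne_zero {x : K} (hx : x ≠ 0) : orbitProd g N x ≠ 0 :=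
  prod_ne_zero_iff.mpr fun u _ => (map_ne_zero (g ^ u)).mpr hx

lemma apply_orbitProd_mul (x : K) : g (orbitProd g N x) * x = orbitProd g N x * (g ^ N) x := by
  have hshift : g (orbitProd g N x) = ∏ u ∈ range N, (g ^ (u + 1)) x := by
    simp only [orbitProd, map_prod, pow_succ', AlgEquiv.mul_apply]
  rw [hshift, orbitProd, ← prod_range_succ, prod_range_succ', pow_zero, AlgEquiv.one_apply]

lemma orbitProd_pow (x : K) (m : ℕ) : orbitProd g N (x ^ m) = orbitProd g N x ^ m := by
  simp only [orbitProd, map_pow, prod_pow]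

lemma orbitProd_mul (a b : ℕ) (x : K) :
    orbitProd g (a * b) x = orbitProd g a (orbitProd (g ^ a) b x) := by
  induction b with
  | zero => simp [orbitProd]
  | succ b ih =>
    simp only [orbitProd] at ih ⊢
    rw [Nat.mul_succ, prod_range_add, ih]
    simp only [prod_range_succ, map_mul, map_prod, prod_mul_distrib, ← pow_mul,
      ← AlgEquiv.mul_apply, ← pow_add, add_comm (a * b)]

lemma apply_orbitProd_eq_smul {ζ : F} {x : K} (hx : x ≠ 0)
    (h : (g ^ N) x = ζ • x) : g (orbitProd g N x) = ζ • orbitProd g N x := by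
  have := apply_orbitProd_mul g N x
  rw [h, mul_smul_comm, ← smul_mul_assoc] at this
  exact mul_right_cancel₀ hx this

end OrbitProd

section Eigenvector

variable {F K : Type*} [Field F] [Field K] [Algebra F K]

lemma exists_ne_zero_apply_eq_smul [FiniteDimensional F K] (τ : K ≃ₐ[F] K) {ζ : F}
    (hζ : ζ ^ orderOf τ = 1) : ∃ v : K, v ≠ 0 ∧ τ v = ζ • v := by
  have hroot : (minpoly F τ.toLinearMap).IsRoot ζ := by
    rw [minpoly_algEquiv_toLinearMap τ (isOfFinOrder_of_finite τ)]
    simp [hζ]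
  obtain ⟨v, hv⟩ := (Module.End.hasEigenvalue_of_isRoot hroot).exists_hasEigenvector
  exact ⟨v, hv.2, hv.apply_eq_smul⟩

lemma pow_apply_eq_pow_smul {τ : K ≃ₐ[F] K} {ζ : F} {v : K} (h : τ v = ζ • v) (m : ℕ) :
    (τ ^ m) v = ζ ^ m • v := by
  induction m with
  | zero => simp
  | succ m ih => rw [pow_succ', AlgEquiv.mul_apply, ih, map_smul, h, smul_smul, pow_succ]

lemma exists_norm_compatible_eigenvectors [FiniteDimensional F K] {p n : ℕ} (hp : 0 < p)
    (hn : 1 ≤ n) {σ : K ≃ₐ[F] K} (hσ : orderOf σ = p ^ n) {ζ : F} (hζ : ζ ^ p = 1) :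
    ∃ r : ℕ → K, (∀ i, r i ≠ 0) ∧ (∀ i < n, (σ ^ p ^ i) (r i) = ζ • r i) ∧
      ∀ j i, j ≤ i → i < n → orbitProd (σ ^ p ^ j) (p ^ (i - j)) (r i) = r j := by
  have hσp : orderOf (σ ^ p ^ (n - 1)) = p := by
    rw [orderOf_pow_of_dvd (pow_ne_zero _ hp.ne') (hσ ▸ pow_dvd_pow p (Nat.sub_le n 1)), hσ,
      Nat.pow_div (Nat.sub_le n 1) hp, Nat.sub_sub_self hn, pow_one]
  obtain ⟨α, hα0, hα⟩ := exists_ne_zero_apply_eq_smul (σ ^ p ^ (n - 1)) (hσp ▸ hζ)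
  have hpow : ∀ j i, j ≤ i → σ ^ p ^ i = (σ ^ p ^ j) ^ p ^ (i - j) := fun j i hji => by
    rw [← pow_mul, ← pow_add, Nat.add_sub_cancel' hji]
  refine ⟨fun i => orbitProd (σ ^ p ^ i) (p ^ (n - 1 - i)) α, fun i => orbitProd_ne_zero _ _ hα0,
    fun i hi => apply_orbitProd_eq_smul _ _ hα0 ?_, fun j i hji hi => ?_⟩
  · rwa [← hpow i (n - 1) (by omega)]
  · dsimp only
    rw [hpow j i hji, ← orbitProd_mul, ← pow_add]
    congr 2
    omega

end Eigenvector

lemma MulEquiv.forall_mem_zpowers_apply {G G' : Type*} [Group G] [Group G'] {H : Subgroup G}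
    {h : G} (hH : H = Subgroup.zpowers h) (e : H ≃* G') (hh : h ∈ H) :
    ∀ τ, τ ∈ Subgroup.zpowers (e ⟨h, hh⟩) := by
  intro τ
  obtain ⟨k, hk⟩ := Subgroup.mem_zpowers_iff.mp (hH.le (e.symm τ).2)
  refine ⟨k, ?_⟩
  rw [← e.apply_symm_apply τ]
  refine (map_zpow e _ k).symm.trans (congrArg e (Subtype.ext ?_))
  rw [Subgroup.coe_zpow]
  exact hk

section Norm

open IntermediateField

lemma algebraMap_norm_eq_orbitProd_of_zpowers {E L : Type*} [Field E] [Field L] [Algebra E L]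
    [FiniteDimensional E L] [IsGalois E L] {ρ : L ≃ₐ[E] L} (hρ : ∀ τ, τ ∈ Subgroup.zpowers ρ)
    (x : L) : algebraMap E L (Algebra.norm E x) = orbitProd ρ (finrank E L) x := by
  classical
  have hinj : Set.InjOn (fun v => ρ ^ v) (range (Nat.card (L ≃ₐ[E] L))) := by
    intro a ha b hb hab
    rw [← orderOf_eq_card_of_forall_mem_zpowers hρ] at ha hb
    exact pow_injOn_Iio_orderOf (by simpa using ha) (by simpa using hb) hab
  rw [Algebra.norm_eq_prod_automorphisms, ← IsCyclic.image_range_card hρ, prod_image hinj,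
    IsGalois.card_aut_eq_finrank, orbitProd]

lemma algebraMap_norm_eq_orbitProd {E K : Type*} [Field E] [Field K] [Algebra E K]
    [FiniteDimensional E K] [IsGalois E K] {g : K ≃ₐ[E] K} (hg : ∀ τ, τ ∈ Subgroup.zpowers g)
    (L : IntermediateField E K) (x : L) :
    algebraMap E K (Algebra.norm E x) = orbitProd g (finrank E L) x := by
  have : IsCyclic (K ≃ₐ[E] K) := ⟨g, hg⟩
  have : IsAbelianGalois E K := {}
  have hρ : ∀ τ, τ ∈ Subgroup.zpowers (AlgEquiv.restrictNormalHom L g) := by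
    intro τ
    obtain ⟨τ, rfl⟩ := AlgEquiv.restrictNormalHom_surjective K τ
    rw [← MonoidHom.map_zpowers]
    exact Subgroup.mem_map_of_mem _ (hg τ)
  rw [IsScalarTower.algebraMap_apply E L K, algebraMap_norm_eq_orbitProd_of_zpowers hρ,
    orbitProd, orbitProd, map_prod]
  refine prod_congr rfl fun v _ => ?_
  rw [← map_pow, IntermediateField.algebraMap_apply, AlgEquiv.restrictNormalHom_apply]

end Norm

section Degree

open IntermediateField

variable {F K : Type*} [Field F] [Field K] [Algebra F K] [FiniteDimensional F K]

lemma eq_sup_adjoin_of_finrank_eq_prime_mul {p : ℕ} (hp : p.Prime) {E L : IntermediateField F K}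
    (hEL : E ≤ L) (hdeg : finrank F L = p * finrank F E) {x : K} (hxL : x ∈ L) (hxE : x ∉ E) :
    L = E ⊔ adjoin F {x} := by
  set M := E ⊔ adjoin F {x}
  have hEM : E ≤ M := le_sup_left
  have hML : M ≤ L := sup_le hEL (adjoin_simple_le_iff.mpr hxL)
  obtain ⟨c, hc⟩ := finrank_dvd_of_le_right hEM
  obtain ⟨d, hd⟩ := finrank_dvd_of_le_right hML
  have hcd : c * d = p := by
    refine Nat.eq_of_mul_eq_mul_left (finrank_pos (R := F) (M := E)) ?_
    rw [← mul_assoc, ← hc, ← hd, hdeg, mul_comm]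
  rcases hp.eq_one_or_self_of_dvd c (Dvd.intro d hcd) with rfl | rfl
  · refine absurd ?_ hxE
    rw [eq_of_le_of_finrank_eq hEM (by rw [hc, mul_one])]
    exact le_sup_right (a := E) (mem_adjoin_simple_self F x)
  · have hd1 : d = 1 := (Nat.mul_eq_left hp.ne_zero).mp hcd
    exact (eq_of_le_of_finrank_eq hML (by rw [hd, hd1, mul_one])).symm

lemma finrank_extendScalars_eq_div {E L : IntermediateField F K} (h : E ≤ L) :
    finrank E (extendScalars h) = finrank F L / finrank F E := by
  refine Nat.eq_div_of_mul_eq_right finrank_pos.ne' ?_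
  rw [← relfinrank_eq_finrank_of_le h, ← relfinrank_bot_left, ← relfinrank_bot_left,
    relfinrank_mul_relfinrank bot_le h]

end Degree

section CyclicGalois

open IntermediateField

variable {F K : Type*} [Field F] [Field K] [Algebra F K] [FiniteDimensional F K] [IsGalois F K]
  {σ : K ≃ₐ[F] K}

lemma fixingSubgroup_eq_zpowers_pow_finrank (hσ : ∀ τ, τ ∈ Subgroup.zpowers σ)
    (E : IntermediateField F K) : E.fixingSubgroup = Subgroup.zpowers (σ ^ finrank F E) := by
  have : IsCyclic (K ≃ₐ[F] K) := ⟨σ, hσ⟩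
  have hindex : E.fixingSubgroup.index = finrank F E := (finrank_eq_fixingSubgroup_index K E).symm
  have hdvd : finrank F E ∣ orderOf σ := by
    rw [orderOf_eq_card_of_forall_mem_zpowers hσ, ← hindex]
    exact E.fixingSubgroup.index_dvd_card
  refine (Subgroup.eq_of_le_of_card_ge (Subgroup.zpowers_le.mpr ?_) ?_).symm
  · rw [← hindex]
    exact E.fixingSubgroup.pow_index_mem σ
  · have hcard := E.fixingSubgroup.card_mul_index
    rw [hindex, ← orderOf_eq_card_of_forall_mem_zpowers hσ] at hcard
    rw [Nat.card_zpowers, orderOf_pow_of_dvd finrank_pos.ne' hdvd, ← hcard,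
      Nat.mul_div_cancel _ finrank_pos]

lemma mem_iff_pow_finrank_apply_eq (hσ : ∀ τ, τ ∈ Subgroup.zpowers σ)
    (E : IntermediateField F K) (x : K) : x ∈ E ↔ (σ ^ finrank F E) x = x := by
  conv_lhs => rw [← IsGalois.fixedField_fixingSubgroup E]
  rw [mem_fixedField_iff, fixingSubgroup_eq_zpowers_pow_finrank hσ]
  refine ⟨fun h => h _ (Subgroup.mem_zpowers _), fun h τ hτ => ?_⟩
  exact Subgroup.zpowers_le.mpr (MulAction.mem_stabilizer_iff.mpr h) hτ

lemma algebraMap_norm_inclusion_eq_orbitProd (hσ : ∀ τ, τ ∈ Subgroup.zpowers σ)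
    {E L : IntermediateField F K} (h : E ≤ L) (x : L) :
    ((@Algebra.norm E L _ _ (inclusion h).toRingHom.toAlgebra x : E) : K)
      = orbitProd (σ ^ finrank F E) (finrank F L / finrank F E) x := by
  let : Algebra E L := (inclusion h).toRingHom.toAlgebra
  let e : L ≃ₐ[E] extendScalars h :=
    { toFun := fun y => ⟨y, y.2⟩
      invFun := fun y => ⟨y, y.2⟩
      left_inv := fun _ => rfl
      right_inv := fun _ => rfl
      map_mul' := fun _ _ => rfl
      map_add' := fun _ _ => rfl
      commutes' := fun _ => rfl }
  have hσE : σ ^ finrank F E ∈ E.fixingSubgroup := by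
    rw [fixingSubgroup_eq_zpowers_pow_finrank hσ]
    exact Subgroup.mem_zpowers _
  let g : K ≃ₐ[E] K := fixingSubgroupEquiv E ⟨_, hσE⟩
  have hg : ∀ τ, τ ∈ Subgroup.zpowers g :=
    MulEquiv.forall_mem_zpowers_apply (fixingSubgroup_eq_zpowers_pow_finrank hσ E) _ hσE
  rw [← Algebra.norm_eq_of_algEquiv e, ← IntermediateField.algebraMap_apply,
    algebraMap_norm_eq_orbitProd hg, finrank_extendScalars_eq_div]
  refine prod_congr rfl fun v _ => ?_
  rw [← map_pow]
  rfl

end CyclicGalois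

/-- **Subfield Generators.** If `ξ_p ∈ F`, one may choose `a_i ∈ K_i^×`, `0 ≤ i < n`, with
`K_{i+1} = K_i(ᵖ√a_i)` and `N_{K_i/K_j}(a_i) = a_j` for all `0 ≤ j < i < n`. -/
theorem statement_9
    (p n : ℕ) (hp : p.Prime) (hn : 1 ≤ n)
    (F K : Type) [Field F] [Field K] [Algebra F K]
    [FiniteDimensional F K] [IsGalois F K]
    (σ : K ≃ₐ[F] K) (hσ : ∀ τ : K ≃ₐ[F] K, τ ∈ Subgroup.zpowers σ)
    (hG : Nat.card (K ≃ₐ[F] K) = p ^ n)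
    (Ki : ℕ → IntermediateField F K)
    (hKideg : ∀ i, i ≤ n → Module.finrank F ↥(Ki i) = p ^ i)
    (hchain : ∀ i j : ℕ, i ≤ j → j ≤ n → Ki i ≤ Ki j)
    (hξ : ∃ ζ : F, IsPrimitiveRoot ζ p) :
    ∃ a : (i : ℕ) → ↥(Ki i),
      (∀ i : ℕ, i < n → (a i : K) ≠ 0) ∧
      (∀ i : ℕ, i < n → ∃ r : K, r ^ p = (a i : K) ∧
        Ki (i + 1) = Ki i ⊔ IntermediateField.adjoin F {r}) ∧
      (∀ j i : ℕ, ∀ hji : j < i, ∀ hi : i < n,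
        (@Algebra.norm (↥(Ki j)) (↥(Ki i)) _ _
          ((IntermediateField.inclusion (hchain j i hji.le hi.le)).toRingHom.toAlgebra))
          (a i) = a j) := by
  obtain ⟨ζ, hζ⟩ := hξ
  obtain ⟨r, hr0, hr, hrnorm⟩ := exists_norm_compatible_eigenvectors hp.pos hn
    (orderOf_eq_card_of_forall_mem_zpowers hσ ▸ hG) hζ.pow_eq_one
  have hmem : ∀ i ≤ n, ∀ x : K, x ∈ Ki i ↔ (σ ^ p ^ i) x = x := fun i hi x => by
    rw [mem_iff_pow_finrank_apply_eq hσ, hKideg i hi]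
  have hpow_mem : ∀ i < n, r i ^ p ∈ Ki i := fun i hi => by
    rw [hmem i hi.le, map_pow, hr i hi, smul_pow, hζ.pow_eq_one, one_smul]
  have hmem_succ : ∀ i < n, r i ∈ Ki (i + 1) := fun i hi => by
    rw [hmem (i + 1) hi, pow_succ, pow_mul, pow_apply_eq_pow_smul (hr i hi), hζ.pow_eq_one,
      one_smul]
  have hnot_mem : ∀ i < n, r i ∉ Ki i := fun i hi h => by
    rw [hmem i hi.le, hr i hi, ← one_smul F (r i), smul_smul, mul_one] at h
    exact hζ.ne_one hp.one_lt (smul_left_injective F (hr0 i) h)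
  refine ⟨fun i => if h : i < n then ⟨r i ^ p, hpow_mem i h⟩ else 1, fun i hi => ?_,
    fun i hi => ⟨r i, by simp [hi], ?_⟩, fun j i hji hi => Subtype.ext ?_⟩
  · simpa [hi] using pow_ne_zero p (hr0 i)
  · refine eq_sup_adjoin_of_finrank_eq_prime_mul hp (hchain i (i + 1) (by omega) hi)
      ?_ (hmem_succ i hi) (hnot_mem i hi)
    rw [hKideg i hi.le, hKideg (i + 1) hi, pow_succ']
  · rw [algebraMap_norm_inclusion_eq_orbitProd hσ, hKideg i hi.le, hKideg j (by omega),
      Nat.pow_div hji.le hp.pos]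
    simp only [hi, dif_pos, show j < n by omega, orbitProd_pow, hrnorm j i hji.le hi]

end PC
end

section
/- Suppose ξ_p ∈ F and, if p = 2, that either n > 1 or -1 ∈ N_{K/F}(K^×). Then there exists δ ∈ K^× with [N_{K/F}(δ)]_F ≠ [1]_F; consequently i(K/F) is well defined and an exceptional element of K/F exists. -/
/-! Let `ξ ∈ F` be a primitive `p`-th root of unity and `m = p^(n-1)`, so that `σ^m` has order `p`.
An eigenvector `B` of `σ^m` with eigenvalue `ξ` yields `C = ∏_{r<m} σ^r B` with `σ C = ξ C`, and
`N_{K/F}(B) = ∏_{q<p} σ^(mq) C = (∏_{q<p} ξ^q)^m C^p = ±C^p`, the sign being `-1` only when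
`p = 2`, `n = 1`, where an element of norm `-1` absorbs it. If `C^p` were a `p`-th power `f^p`
with `f ∈ F`, then `C / f` would be a power of `ξ`, so `C ∈ F` would be fixed by `σ`,
contradicting `σ C = ξ C`. Since `K_n = K`, the stage predicate holds at `n`, and `i(K/F)` is
its least stage. -/

namespace PC

open Finset

section Automorphisms

variable {F K : Type*} [Field F] [Field K] [Algebra F K]

lemma exists_ne_zero_apply_eq_algebraMap_mul [FiniteDimensional F K] (τ : K ≃ₐ[F] K) {ζ : F}
    (hζ : ζ ^ orderOf τ = 1) : ∃ B : K, B ≠ 0 ∧ τ B = algebraMap F K ζ * B := by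
  have hroot : (minpoly F τ.toLinearMap).IsRoot ζ := by
    simp [minpoly_algEquiv_toLinearMap τ (isOfFinOrder_of_finite τ), hζ]
  obtain ⟨B, hB⟩ := (Module.End.hasEigenvalue_of_isRoot hroot).exists_hasEigenvector
  exact ⟨B, hB.2, by simpa [Algebra.smul_def] using hB.apply_eq_smul⟩

lemma apply_prod_range_pow_apply (σ : K ≃ₐ[F] K) (m : ℕ) {B c : K} (hB0 : B ≠ 0)
    (hB : (σ ^ m) B = c * B) :
    σ (∏ r ∈ range m, (σ ^ r) B) = c * ∏ r ∈ range m, (σ ^ r) B := by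
  have hshift : σ (∏ r ∈ range m, (σ ^ r) B) = ∏ r ∈ range m, (σ ^ (r + 1)) B := by
    simp only [map_prod, pow_succ', AlgEquiv.mul_apply]
  refine mul_right_cancel₀ hB0 ?_
  calc σ (∏ r ∈ range m, (σ ^ r) B) * B = ∏ r ∈ range (m + 1), (σ ^ r) B := by
        rw [hshift, prod_range_succ' _ m, pow_zero, AlgEquiv.one_apply]
    _ = c * (∏ r ∈ range m, (σ ^ r) B) * B := by
        rw [prod_range_succ, hB]; ring

lemma prod_range_mul_pow_apply (σ : K ≃ₐ[F] K) (B : K) (m t : ℕ) :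
    ∏ i ∈ range (m * t), (σ ^ i) B = ∏ q ∈ range t, (σ ^ (m * q)) (∏ r ∈ range m, (σ ^ r) B) := by
  induction t with
  | zero => simp
  | succ t ih =>
    simp only [Nat.mul_succ, prod_range_add, ih, prod_range_succ, map_prod, pow_add,
      AlgEquiv.mul_apply]

lemma pow_apply_of_apply_eq_mul (σ : K ≃ₐ[F] K) {C c : K} (hc : σ c = c) (hC : σ C = c * C)
    (j : ℕ) : (σ ^ j) C = c ^ j * C := by
  induction j with
  | zero => simp
  | succ j ih => rw [pow_succ', AlgEquiv.mul_apply, ih, map_mul, map_pow, hc, hC]; ring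

lemma algebraMap_norm_eq_prod_range_orderOf [FiniteDimensional F K] [IsGalois F K]
    {σ : K ≃ₐ[F] K} (hσ : ∀ τ, τ ∈ Subgroup.zpowers σ) (x : K) :
    algebraMap F K (Algebra.norm F x) = ∏ i ∈ range (orderOf σ), (σ ^ i) x := by
  classical
  rw [Algebra.norm_eq_prod_automorphisms, ← IsCyclic.image_range_orderOf hσ,
    prod_image fun i hi j hj h => pow_injOn_Iio_orderOf (by simpa using hi) (by simpa using hj) h]

lemma algebraMap_pow_ne_pow_of_apply_eq_mul {p : ℕ} (hp : 1 < p) {ζ : F}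
    (hζ : IsPrimitiveRoot ζ p) {σ : K ≃ₐ[F] K} {D : K} (hD0 : D ≠ 0)
    (hD : σ D = algebraMap F K ζ * D) (f : F) : algebraMap F K f ^ p ≠ D ^ p := by
  intro hfD
  have : NeZero p := ⟨by omega⟩
  have hf0 : algebraMap F K f ≠ 0 := by
    intro hf
    rw [hf, zero_pow (by omega)] at hfD
    exact hD0 (pow_eq_zero_iff (by omega) |>.mp hfD.symm)
  obtain ⟨i, -, hi⟩ := (hζ.map_of_injective (algebraMap F K).injective).eq_pow_of_pow_eq_one
    (show (D / algebraMap F K f) ^ p = 1 by rw [div_pow, ← hfD, div_self (pow_ne_zero _ hf0)])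
  have hDF : D = algebraMap F K (ζ ^ i * f) := by
    rw [map_mul, map_pow, hi, div_mul_cancel₀ _ hf0]
  have hfix : algebraMap F K ζ * D = 1 * D := by rw [← hD, one_mul, hDF, AlgEquiv.commutes]
  exact hζ.ne_one hp ((algebraMap F K).injective (by simpa using mul_right_cancel₀ hD0 hfix))

end Automorphisms

lemma IsPrimitiveRoot.prod_range_pow {K : Type*} [CommRing K] [IsDomain K] {ξ : K} {p : ℕ}
    (hp : p.Prime) (hξ : IsPrimitiveRoot ξ p) : ∏ q ∈ range p, ξ ^ q = (-1) ^ (p - 1) := by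
  rw [prod_pow_eq_pow_sum]
  rcases hp.eq_two_or_odd' with rfl | ⟨k, rfl⟩
  · simp [hξ.eq_neg_one_of_two_right, sum_range_succ]
  · have hsum : ∑ q ∈ range (2 * k + 1), q = (2 * k + 1) * k := by
      have := sum_range_id_mul_two (2 * k + 1)
      simp only [Nat.add_sub_cancel] at this
      nlinarith
    rw [hsum, pow_mul, hξ.pow_eq_one, one_pow, Nat.add_sub_cancel, pow_mul, neg_one_sq, one_pow]

section Norms

variable {F K : Type*} [Field F] [Field K] [Algebra F K] [FiniteDimensional F K] [IsGalois F K]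

lemma exists_algebraMap_norm_eq_neg_one_pow_mul_pow {p n : ℕ} (hp : p.Prime) (hn : 1 ≤ n)
    {σ : K ≃ₐ[F] K} (hσ : ∀ τ, τ ∈ Subgroup.zpowers σ) (hord : orderOf σ = p ^ n) {ζ : F}
    (hζ : IsPrimitiveRoot ζ p) :
    ∃ B C : K, B ≠ 0 ∧ C ≠ 0 ∧ σ C = algebraMap F K ζ * C ∧
      algebraMap F K (Algebra.norm F B) = (-1) ^ ((p - 1) * p ^ (n - 1)) * C ^ p := by
  set m := p ^ (n - 1)
  have hmp : m * p = orderOf σ := by rw [hord, ← pow_succ, Nat.sub_add_cancel hn]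
  have hτ : orderOf (σ ^ m) = p := by
    rw [show m = orderOf σ / p from (Nat.div_eq_of_eq_mul_left hp.pos hmp.symm).symm,
      orderOf_pow_orderOf_div (hord ▸ (pow_pos hp.pos n).ne') ⟨m, by rw [← hmp, mul_comm]⟩]
  set ξ := algebraMap F K ζ
  have hξσ : σ ξ = ξ := σ.commutes ζ
  obtain ⟨B, hB0, hB⟩ := exists_ne_zero_apply_eq_algebraMap_mul (σ ^ m) (hτ ▸ hζ.pow_eq_one)
  set C := ∏ r ∈ range m, (σ ^ r) B
  have hC0 : C ≠ 0 := prod_ne_zero_iff.mpr fun r _ => (map_ne_zero (σ ^ r)).mpr hB0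
  have hC : σ C = ξ * C := apply_prod_range_pow_apply σ m hB0 hB
  refine ⟨B, C, hB0, hC0, hC, ?_⟩
  calc algebraMap F K (Algebra.norm F B) = ∏ q ∈ range p, (σ ^ (m * q)) C := by
        rw [algebraMap_norm_eq_prod_range_orderOf hσ, ← hmp, prod_range_mul_pow_apply]
    _ = (∏ q ∈ range p, ξ ^ q) ^ m * C ^ p := by
        rw [prod_congr rfl fun q _ => pow_apply_of_apply_eq_mul σ hξσ hC (m * q),
          prod_mul_distrib, prod_const, card_range]
        simp only [pow_mul', prod_pow]
    _ = (-1) ^ ((p - 1) * m) * C ^ p := by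
        rw [IsPrimitiveRoot.prod_range_pow hp (hζ.map_of_injective (algebraMap F K).injective),
          pow_mul]

theorem exists_norm_ne_pow {p n : ℕ} (hp : p.Prime) (hn : 1 ≤ n) {σ : K ≃ₐ[F] K}
    (hσ : ∀ τ, τ ∈ Subgroup.zpowers σ) (hG : Nat.card (K ≃ₐ[F] K) = p ^ n)
    (hξ : ∃ ζ : F, IsPrimitiveRoot ζ p)
    (hp2 : p = 2 → 1 < n ∨ ∃ x : K, Algebra.norm F x = -1) :
    ∃ δ : Kˣ, ∀ f : F, f ^ p ≠ Algebra.norm F (δ : K) := by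
  obtain ⟨ζ, hζ⟩ := hξ
  obtain ⟨B, C, hB0, hC0, hC, hN⟩ := exists_algebraMap_norm_eq_neg_one_pow_mul_pow hp hn hσ
      ((orderOf_eq_card_of_forall_mem_zpowers hσ).trans hG) hζ
  suffices ∃ δ : K, δ ≠ 0 ∧ algebraMap F K (Algebra.norm F δ) = C ^ p by
    obtain ⟨δ, hδ0, hδ⟩ := this
    refine ⟨Units.mk0 δ hδ0, fun f hf => ?_⟩
    exact algebraMap_pow_ne_pow_of_apply_eq_mul hp.one_lt hζ hC0 hC f (by
      rw [← map_pow, hf, Units.val_mk0, hδ])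
  rcases Nat.even_or_odd ((p - 1) * p ^ (n - 1)) with heven | hodd
  · exact ⟨B, hB0, by rw [hN, heven.neg_one_pow, one_mul]⟩
  · obtain ⟨hodd₁, hodd₂⟩ := Nat.odd_mul.mp hodd
    have hp2' : p = 2 := by
      obtain ⟨k, hk⟩ := hodd₁
      rcases hp.eq_two_or_odd with h | h <;> omega
    have hn1 : n = 1 := by
      by_contra hn1
      rw [hp2', Nat.odd_pow_iff (by omega)] at hodd₂
      exact absurd hodd₂ (by decide)
    obtain ⟨x, hx⟩ := (hp2 hp2').resolve_left (by omega)
    have hx0 : x ≠ 0 := by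
      rintro rfl
      simp at hx
    refine ⟨x * B, mul_ne_zero hx0 hB0, ?_⟩
    rw [map_mul, map_mul, hN, hx, hodd.neg_one_pow]
    simp

end Norms

section Index

variable {p : ℕ} {F K : Type} [Field F] [Field K] [Algebra F K]

lemma clsOf_top : clsOf p (⊤ : IntermediateField F K) = ⊤ := by
  refine eq_top_iff.mpr fun x _ => ?_
  induction x using QuotientGroup.induction_on with
  | H u => exact Subgroup.mem_map.mpr ⟨u, IntermediateField.mem_top (F := F) (x := u.val), rfl⟩

lemma stage_clsOfW_of_eq_top {Ki : ℕ → IntermediateField F K} {n : ℕ} (hKi : Ki n = ⊤) {δ : Kˣ}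
    (hδ : ∀ f : F, f ^ p ≠ Algebra.norm F (δ : K)) : Stage p F (clsOfW p Ki n) :=
  ⟨δ, hδ, fun _ => by
    show _ ∈ clsOf p (Ki n)
    rw [hKi, clsOf_top]
    exact Subgroup.mem_top _⟩

lemma exists_isIdx_isExceptional (Ki : ℕ → IntermediateField F K) {m₀ : WithBot ℕ}
    (h : Stage p F (clsOfW p Ki m₀)) : ∃ m, IsIdx p Ki m ∧ ∃ δ, IsExceptional p F Ki m δ := by
  obtain ⟨m, ⟨δ, hδ⟩, hmin⟩ := wellFounded_lt.has_min {m | Stage p F (clsOfW p Ki m)} ⟨m₀, h⟩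
  exact ⟨m, ⟨⟨δ, hδ⟩, fun i hi hi' => hmin i hi' hi⟩, δ, hδ⟩

end Index

/-- **Proposition (existence of exceptional elements).** If `ξ_p ∈ F` and, for `p = 2`,
`n > 1` or `-1 ∈ N_{K/F}(K^×)`, then some `δ ∈ K^×` has nontrivial norm class; hence
`i(K/F)` is well defined and an exceptional element of `K/F` exists. -/
theorem statement_11
    (p n : ℕ) (hp : p.Prime) (hn : 1 ≤ n)
    (F K : Type) [Field F] [Field K] [Algebra F K]
    [FiniteDimensional F K] [IsGalois F K]
    (σ : K ≃ₐ[F] K) (hσ : ∀ τ : K ≃ₐ[F] K, τ ∈ Subgroup.zpowers σ)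
    (hG : Nat.card (K ≃ₐ[F] K) = p ^ n)
    (Ki : ℕ → IntermediateField F K)
    (hKideg : ∀ i, i ≤ n → Module.finrank F ↥(Ki i) = p ^ i)
    (hξ : ∃ ζ : F, IsPrimitiveRoot ζ p)
    (hp2 : p = 2 → 1 < n ∨ ∃ x : K, Algebra.norm F x = -1) :
    (∃ δ : Kˣ, ∀ f : F, f ^ p ≠ Algebra.norm F (δ : K)) ∧
    ∃ m : WithBot ℕ, IsIdx p Ki m ∧ ∃ δ : Kˣ, IsExceptional p F Ki m δ := by
  obtain ⟨δ, hδ⟩ := exists_norm_ne_pow hp hn hσ hG hξ hp2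
  have hKn : Ki n = ⊤ := IntermediateField.eq_of_le_of_finrank_eq le_top <| by
    rw [hKideg n le_rfl, IntermediateField.finrank_top', ← IsGalois.card_aut_eq_finrank, hG]
  exact ⟨⟨δ, hδ⟩, exists_isIdx_isExceptional Ki (stage_clsOfW_of_eq_top hKn hδ)⟩

end PC
end

section
/- (Exact Sequence Lemma) Let A = (F^× ∩ K^{×p})/F^{×p}. Then the sequence 1 → A → F^×/F^{×p} →^ε J^G →^N A is exact, where ε is induced by the inclusion F^× → K^× and N is induced by the norm N_{K/F}: K^× → F^×. Moreover: if ξ_p ∉ F then A = 1; if ξ_p ∈ F then A = ⟨[a]_F⟩, and in this case N is surjective if and only if ξ_p ∈ N_{K/F}(K^×). In particular: (i) if [β] ∈ [F^×] then [N_{K/F}(β)]_F = [1]_F; (ii) if [β] ∈ J^G and [N_{K/F}(β)]_F = [1]_F then [β] ∈ [F^×]. -/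
namespace PC

/-!
If `[u] ∈ J^G` then `σ u = u ω^p` for some `ω`, and with `c_i = ω · σω ⋯ σ^{i-1}ω` one gets
`σ^i u = u c_i^p`. Hence `N(u) = y^p` for `y = u^{p^{n-1}} ∏_{i<p^n} c_i`, and `σ y = y N(ω)`.
Since the `p`-group `G` fixes every `p`-th root of unity, any `x` with `x^p = N(u)` and
`σ x = x d` has `d = N(ω)`. If `N(u)` is a `p`-th power in `F` this gives `N(ω) = 1`, so
Hilbert 90 writes `ω = z / σ z` and `u z^p ∈ F`. If instead `N(u) ∈ a F^{×p}`, comparing with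
`x = a^{1/p} g` gives `N(ω) = σr/r` for the Kummer generator `r`, a primitive `p`-th root of
unity; conversely a primitive root `N(x)` produces, through Hilbert 90 applied to `x^p`, a class
in `J^G` whose norm generates `A`. The description of `A` is Kummer theory: for `x^p ∈ F` the
root of unity `σx/x` is a power `(σr/r)^s`, so `x r^{-s}` lies in `F`.
-/

open Finset

section AlgEquiv

variable {F K : Type*} [Field F] [Field K] [Algebra F K] {σ : K ≃ₐ[F] K}

/-- `σ` acts on the `p`-th roots of unity through `(ZMod p)ˣ`, where `c ^ p ^ n = c`. -/
theorem apply_eq_self_of_pow_eq_one {p n : ℕ} (hp : p.Prime) (hσ : σ ^ p ^ n = 1) {μ : K}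
    (hμ : μ ^ p = 1) : σ μ = μ := by
  have := Fact.mk hp
  rcases eq_or_ne μ 1 with rfl | hμ1
  · exact map_one σ
  have hprim : IsPrimitiveRoot μ p := isPrimitiveRoot_of_mem_nthRootsFinset hp
    ((Polynomial.mem_nthRootsFinset hp.pos 1).mpr hμ) hμ1
  have hφ : (hprim.autToPow F σ : ZMod p) = 1 := calc
    _ = ((hprim.autToPow F σ : ZMod p)) ^ p ^ n := (ZMod.pow_card_pow _).symm
    _ = 1 := by rw [← Units.val_pow_eq_pow_val, ← map_pow, hσ, map_one, Units.val_one]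
  rw [← hprim.autToPow_spec F σ, hφ, ZMod.val_one, pow_one]

theorem eq_of_pow_eq_of_apply_eq_mul {p n : ℕ} (hp : p.Prime) (hσ : σ ^ p ^ n = 1)
    {x y d e : K} (hy : y ≠ 0) (hxy : x ^ p = y ^ p) (hσx : σ x = x * d) (hσy : σ y = y * e) :
    d = e := by
  have hx : x ≠ 0 := by
    rintro rfl
    exact pow_ne_zero p hy (by rw [← hxy, zero_pow hp.ne_zero])
  have hfix := apply_eq_self_of_pow_eq_one hp hσ (μ := x / y)
    (by rw [div_pow, hxy, div_self (pow_ne_zero _ hy)])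
  rw [map_div₀, hσx, hσy] at hfix
  have he : e ≠ 0 := by
    rintro rfl
    exact hy (σ.injective (by rw [hσy, mul_zero, map_zero]))
  field_simp at hfix
  exact hfix

theorem exists_pow_eq_prod_of_apply_eq_mul_pow {p N : ℕ} (hpN : p ∣ N) {u ω : K}
    (h : σ u = u * ω ^ p) :
    ∃ y : K, y ^ p = ∏ i ∈ range N, (σ ^ i) u ∧ σ y = y * ∏ i ∈ range N, (σ ^ i) ω := by
  set c : ℕ → K := fun i => ∏ j ∈ range i, (σ ^ j) ω with hc
  have hσc : ∀ i, σ (c i) * ω = c (i + 1) := fun i => by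
    simp only [hc, prod_range_succ', map_prod, pow_zero, AlgEquiv.one_apply, pow_succ',
      AlgEquiv.mul_apply]
  have hσu : ∀ i, (σ ^ i) u = u * c i ^ p := fun i => by
    induction i with
    | zero => simp [hc]
    | succ i ih => rw [pow_succ', AlgEquiv.mul_apply, ih, map_mul, map_pow, h, ← hσc, mul_pow,
        mul_assoc, mul_comm (ω ^ p)]
  obtain ⟨m, rfl⟩ := hpN
  -- `N(u) = ∏ σ^i u = u^(p m) (∏ c_i)^p`
  refine ⟨u ^ m * ∏ i ∈ range (p * m), c i, ?_, ?_⟩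
  · rw [prod_congr rfl fun i _ => hσu i, prod_mul_distrib, prod_const, card_range, prod_pow,
      mul_pow, ← pow_mul, mul_comm m p]
  · have hW : (∏ i ∈ range (p * m), σ (c i)) * ω ^ (p * m) =
        (∏ i ∈ range (p * m), c i) * c (p * m) := calc
      _ = ∏ i ∈ range (p * m), c (i + 1) := by
        rw [← prod_congr rfl fun i _ => hσc i, prod_mul_distrib, prod_const, card_range]
      _ = _ := by
        rw [← prod_range_succ, prod_range_succ']
        simp only [hc, prod_range_zero, mul_one]
    rw [map_mul, map_pow, h, map_prod, mul_pow, ← pow_mul, mul_right_comm, mul_assoc, hW,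
      mul_assoc]

theorem apply_div_self_pow_eq_one {p : ℕ} {x : K} {f : F} (hx0 : x ≠ 0)
    (hx : x ^ p = algebraMap F K f) : (σ x / x) ^ p = 1 := by
  rw [div_pow, ← map_pow, hx, AlgEquiv.commutes, ← hx, div_self (pow_ne_zero p hx0)]

end AlgEquiv

theorem bijective_pow_of_forall_mem_zpowers {G : Type*} [Group G] [Finite G] {g : G}
    (hg : ∀ x, x ∈ Subgroup.zpowers g) :
    Function.Bijective fun i : Fin (orderOf g) ↦ g ^ (i : ℕ) := by
  refine ⟨Subtype.val_injective.comp (finEquivPowers (isOfFinOrder_of_finite g)).injective,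
    fun x => ?_⟩
  obtain ⟨i, hi⟩ := (finEquivPowers (isOfFinOrder_of_finite g)).surjective
    ⟨x, mem_powers_iff_mem_zpowers.mpr (hg x)⟩
  exact ⟨i, congrArg Subtype.val hi⟩

section CyclicGalois

variable {F K : Type*} [Field F] [Field K] [Algebra F K] [FiniteDimensional F K] [IsGalois F K]
  {σ : K ≃ₐ[F] K}

theorem algebraMap_norm_eq_prod_pow (hσ : ∀ τ, τ ∈ Subgroup.zpowers σ) (x : K) :
    algebraMap F K (Algebra.norm F x) = ∏ i ∈ range (orderOf σ), (σ ^ i) x := by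
  rw [Algebra.norm_eq_prod_automorphisms, prod_range]
  exact (Fintype.prod_bijective _ (bijective_pow_of_forall_mem_zpowers hσ) _ _ fun _ => rfl).symm

theorem mem_range_algebraMap_of_apply_eq (hσ : ∀ τ, τ ∈ Subgroup.zpowers σ) {x : K}
    (hx : σ x = x) : x ∈ Set.range (algebraMap F K) :=
  (IsGalois.mem_range_algebraMap_iff_fixed x).mpr fun τ =>
    (Subgroup.zpowers_le.mpr hx : Subgroup.zpowers σ ≤ MulAction.stabilizer _ x) (hσ τ)

theorem exists_pow_eq_algebraMap_norm_of_apply_eq_mul_pow {p n : ℕ} (hn : n ≠ 0)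
    (hσ : ∀ τ, τ ∈ Subgroup.zpowers σ) (hG : Nat.card (K ≃ₐ[F] K) = p ^ n) {u ω : K}
    (hω : σ u = u * ω ^ p) :
    ∃ y : K, y ^ p = algebraMap F K (Algebra.norm F u) ∧
      σ y = y * algebraMap F K (Algebra.norm F ω) := by
  have hord : orderOf σ = p ^ n := by rw [orderOf_eq_card_of_forall_mem_zpowers hσ, hG]
  simpa only [← hord, ← algebraMap_norm_eq_prod_pow hσ] using
    exists_pow_eq_prod_of_apply_eq_mul_pow (dvd_pow_self p hn) hω

theorem algebraMap_norm_eq_of_pow_eq_algebraMap_norm {p n : ℕ} (hp : p.Prime) (hn : n ≠ 0)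
    (hσ : ∀ τ, τ ∈ Subgroup.zpowers σ) (hG : Nat.card (K ≃ₐ[F] K) = p ^ n) {u ω x d : K}
    (hu : u ≠ 0) (hω : σ u = u * ω ^ p) (hx : x ^ p = algebraMap F K (Algebra.norm F u))
    (hσx : σ x = x * d) : d = algebraMap F K (Algebra.norm F ω) := by
  obtain ⟨y, hy, hσy⟩ := exists_pow_eq_algebraMap_norm_of_apply_eq_mul_pow hn hσ hG hω
  have hy0 : y ≠ 0 := by
    rintro rfl
    rw [zero_pow hp.ne_zero, eq_comm, map_eq_zero, Algebra.norm_eq_zero_iff] at hy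
    exact hu hy
  exact eq_of_pow_eq_of_apply_eq_mul hp (hG ▸ pow_card_eq_one') hy0 (hx.trans hy.symm) hσx hσy

theorem exists_pow_eq_of_forall_not_isPrimitiveRoot {p n : ℕ} (hp : p.Prime)
    (hσ : ∀ τ, τ ∈ Subgroup.zpowers σ) (hG : Nat.card (K ≃ₐ[F] K) = p ^ n)
    (hF : ∀ ζ : F, ¬ IsPrimitiveRoot ζ p) {f : F} {x : K} (hx : x ^ p = algebraMap F K f) :
    ∃ g : F, g ^ p = f := by
  rcases eq_or_ne x 0 with rfl | hx0
  · refine ⟨0, FaithfulSMul.algebraMap_injective F K ?_⟩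
    rw [← hx, map_pow, map_zero]
  have hμ := apply_div_self_pow_eq_one (σ := σ) hx0 hx
  obtain ⟨m, hm⟩ := mem_range_algebraMap_of_apply_eq hσ
    (apply_eq_self_of_pow_eq_one hp (hG ▸ pow_card_eq_one') hμ)
  have hm1 : m = 1 := by
    by_contra hm1
    refine hF m (isPrimitiveRoot_of_mem_nthRootsFinset hp
      ((Polynomial.mem_nthRootsFinset hp.pos 1).mpr ?_) hm1)
    apply FaithfulSMul.algebraMap_injective F K
    rw [map_pow, hm, hμ, map_one]
  rw [hm1, map_one, eq_comm, div_eq_one_iff_eq hx0] at hm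
  obtain ⟨g, rfl⟩ := mem_range_algebraMap_of_apply_eq hσ hm
  exact ⟨g, FaithfulSMul.algebraMap_injective F K (by rw [map_pow, hx])⟩

theorem isPrimitiveRoot_apply_div_self {p : ℕ} (hp : p.Prime) (hσ : ∀ τ, τ ∈ Subgroup.zpowers σ)
    {r : K} {a : F} (hr : r ^ p = algebraMap F K a) (hrF : r ∉ Set.range (algebraMap F K)) :
    IsPrimitiveRoot (σ r / r) p := by
  have hr0 : r ≠ 0 := by
    rintro rfl
    exact hrF ⟨0, map_zero _⟩
  refine isPrimitiveRoot_of_mem_nthRootsFinset hp ((Polynomial.mem_nthRootsFinset hp.pos 1).mpr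
    (apply_div_self_pow_eq_one hr0 hr)) fun h => hrF (mem_range_algebraMap_of_apply_eq hσ ?_)
  rwa [div_eq_one_iff_eq hr0] at h

theorem exists_eq_pow_mul_pow_of_pow_eq_algebraMap {p : ℕ} (hp : p.Prime)
    (hσ : ∀ τ, τ ∈ Subgroup.zpowers σ) {r : K} {a : F} (hr : r ^ p = algebraMap F K a)
    (hrF : r ∉ Set.range (algebraMap F K)) {f : F} {x : K} (hx : x ^ p = algebraMap F K f) :
    ∃ (s : ℕ) (g : F), f = a ^ s * g ^ p := by
  have := Fact.mk hp
  rcases eq_or_ne x 0 with rfl | hx0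
  · refine ⟨0, 0, FaithfulSMul.algebraMap_injective F K ?_⟩
    rw [← hx, zero_pow hp.ne_zero, zero_pow hp.ne_zero, mul_zero, map_zero]
  have hr0 : r ≠ 0 := by
    rintro rfl
    exact hrF ⟨0, map_zero _⟩
  obtain ⟨s, -, hs⟩ := (isPrimitiveRoot_apply_div_self hp hσ hr hrF).eq_pow_of_pow_eq_one
    (apply_div_self_pow_eq_one hx0 hx)
  have hσx : σ x = (σ r / r) ^ s * x := by rw [hs, div_mul_cancel₀ _ hx0]
  have hσr0 : σ r ≠ 0 := (map_ne_zero σ).mpr hr0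
  obtain ⟨g, hg⟩ := mem_range_algebraMap_of_apply_eq hσ (x := x / r ^ s) (by
    rw [map_div₀, map_pow, hσx, div_pow]
    field_simp)
  refine ⟨s, g, FaithfulSMul.algebraMap_injective F K ?_⟩
  rw [map_mul, map_pow, map_pow, hg, ← hx, ← hr, div_pow, ← pow_mul, ← pow_mul, mul_comm p s,
    mul_div_cancel₀ _ (pow_ne_zero _ hr0)]

theorem exists_pow_eq_algebraMap_iff {p : ℕ} (hp : p.Prime) (hσ : ∀ τ, τ ∈ Subgroup.zpowers σ)
    {r : K} {a : F} (hr : r ^ p = algebraMap F K a) (hrF : r ∉ Set.range (algebraMap F K))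
    (f : F) : (∃ x : K, x ^ p = algebraMap F K f) ↔ ∃ (s : ℕ) (g : F), f = a ^ s * g ^ p := by
  refine ⟨fun ⟨x, hx⟩ => exists_eq_pow_mul_pow_of_pow_eq_algebraMap hp hσ hr hrF hx, ?_⟩
  rintro ⟨s, g, rfl⟩
  exact ⟨r ^ s * algebraMap F K g, by
    rw [mul_pow, ← pow_mul, mul_comm s p, pow_mul, hr, map_mul, map_pow, map_pow]⟩

end CyclicGalois

theorem exists_pow_eq_pow_mul_pow_of_not_dvd {M : Type*} [CommMonoid M] {p s : ℕ} (hp : p.Prime)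
    (hs : ¬ p ∣ s) (s₀ : ℕ) (a g : M) :
    ∃ (k : ℕ) (e : M), (a ^ s * g ^ p) ^ k = a ^ s₀ * e ^ p := by
  obtain ⟨m, -, hm⟩ := Nat.exists_mul_mod_eq_of_coprime s₀
    ((Nat.Prime.coprime_iff_not_dvd hp).mpr hs).symm hp.ne_zero
  have hs0 : 0 < s := Nat.pos_of_ne_zero fun h => hs (h ▸ dvd_zero p)
  have hle : s₀ ≤ s * (m + p * s₀) := calc
    s₀ ≤ p * s₀ := Nat.le_mul_of_pos_left s₀ hp.pos
    _ ≤ m + p * s₀ := Nat.le_add_left _ _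
    _ ≤ s * (m + p * s₀) := Nat.le_mul_of_pos_left _ hs0
  have hmod : s₀ ≡ s * (m + p * s₀) [MOD p] := by
    rw [Nat.ModEq, mul_add, Nat.mul_left_comm, Nat.add_mul_mod_self_left, hm]
  obtain ⟨q, hq⟩ := (Nat.modEq_iff_dvd' hle).mp hmod
  refine ⟨m + p * s₀, a ^ q * g ^ (m + p * s₀), ?_⟩
  rw [mul_pow, ← pow_mul, ← pow_mul, show s * (m + p * s₀) = s₀ + p * q by omega, pow_add,
    mul_pow, ← pow_mul, ← pow_mul, mul_assoc, mul_comm q p, mul_comm (m + p * s₀) p]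

section ExactSequence

variable {F K : Type} [Field F] [Field K] [Algebra F K] {p : ℕ}

theorem cls_eq_cls_iff (u v : Kˣ) : cls p u = cls p v ↔ ∃ w : Kˣ, v = u * w ^ p := by
  rw [cls, cls, QuotientGroup.eq]
  refine ⟨fun ⟨w, hw⟩ => ⟨w, ?_⟩, fun ⟨w, hw⟩ => ⟨w, ?_⟩⟩
  · rw [show w ^ p = u⁻¹ * v from hw, mul_inv_cancel_left]
  · rw [hw, inv_mul_cancel_left, powMonoidHom_apply]

theorem galJ_mul_apply (σ τ : K ≃ₐ[F] K) (x : Jgrp p K) :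
    galJ p (σ * τ) x = galJ p σ (galJ p τ x) :=
  QuotientGroup.induction_on x fun _ => rfl

theorem galJ_pow_apply_of_apply_eq {σ : K ≃ₐ[F] K} {x : Jgrp p K} (hx : galJ p σ x = x) (k : ℕ) :
    galJ p (σ ^ k) x = x := by
  induction k with
  | zero => exact QuotientGroup.induction_on x fun _ => rfl
  | succ k ih => rw [pow_succ', galJ_mul_apply, ih, hx]

theorem cls_mem_fixedJ_top_iff [Finite (K ≃ₐ[F] K)] (hp : p ≠ 0) {σ : K ≃ₐ[F] K}
    (hσ : ∀ τ, τ ∈ Subgroup.zpowers σ) (u : Kˣ) :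
    cls p u ∈ fixedJ p (⊤ : Subgroup (K ≃ₐ[F] K)) ↔ ∃ ω : K, σ u = u * ω ^ p := by
  constructor
  · intro hu
    obtain ⟨w, hw⟩ := (cls_eq_cls_iff _ _).mp (hu σ trivial).symm
    exact ⟨w, by simpa using congrArg Units.val hw⟩
  · rintro ⟨ω, hω⟩ τ -
    have hω0 : ω ≠ 0 := by
      rintro rfl
      rw [zero_pow hp, mul_zero, map_eq_zero] at hω
      exact u.ne_zero hω
    obtain ⟨k, rfl⟩ := mem_powers_iff_mem_zpowers.mpr (hσ τ)
    refine galJ_pow_apply_of_apply_eq ((cls_eq_cls_iff _ _).mpr ⟨Units.mk0 ω hω0, ?_⟩).symm k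
    ext
    simpa using hω

theorem cls_map_algebraMap_eq_one_iff (hp : p ≠ 0) (f : Fˣ) :
    cls p (Units.map (algebraMap F K : F →* K) f) = 1 ↔ ∃ x : K, x ^ p = algebraMap F K f := by
  rw [show (1 : Jgrp p K) = cls p 1 from rfl, eq_comm, cls_eq_cls_iff]
  constructor
  · rintro ⟨w, hw⟩
    exact ⟨w, by simpa using (congrArg Units.val hw).symm⟩
  · rintro ⟨x, hx⟩
    have hx0 : x ≠ 0 := by
      rintro rfl
      rw [zero_pow hp, eq_comm, map_eq_zero] at hx
      exact f.ne_zero hx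
    exact ⟨Units.mk0 x hx0, by ext; simp [hx]⟩

theorem cls_map_algebraMap_mem_fixedJ (f : Fˣ) :
    cls p (Units.map (algebraMap F K : F →* K) f) ∈ fixedJ p (⊤ : Subgroup (K ≃ₐ[F] K)) :=
  fun τ _ => congrArg (cls p) (Units.ext (τ.commutes f))

theorem exists_pow_eq_norm_of_cls_mem_clsOf_bot (hp : p ∣ Module.finrank F K) (u : Kˣ)
    (hu : cls p u ∈ clsOf p (⊥ : IntermediateField F K)) :
    ∃ f : F, f ^ p = Algebra.norm F (u : K) := by
  obtain ⟨w, hw, hwu⟩ := Subgroup.mem_map.mp hu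
  obtain ⟨v, rfl⟩ := (cls_eq_cls_iff w u).mp hwu
  obtain ⟨g, hg⟩ := IntermediateField.mem_bot.mp hw
  obtain ⟨m, hm⟩ := hp
  refine ⟨g ^ m * Algebra.norm F (v : K), ?_⟩
  rw [Units.val_mul, Units.val_pow_eq_pow_val, map_mul, map_pow, ← hg, Algebra.norm_algebraMap,
    hm, mul_pow, ← pow_mul, mul_comm m p]

variable [FiniteDimensional F K] [IsGalois F K] {n : ℕ} {σ : K ≃ₐ[F] K}

theorem exists_pow_eq_algebraMap_norm_of_cls_mem_fixedJ (hp : p.Prime) (hn : n ≠ 0)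
    (hσ : ∀ τ, τ ∈ Subgroup.zpowers σ) (hG : Nat.card (K ≃ₐ[F] K) = p ^ n) (u : Kˣ)
    (hu : cls p u ∈ fixedJ p (⊤ : Subgroup (K ≃ₐ[F] K))) :
    ∃ x : K, x ^ p = algebraMap F K (Algebra.norm F (u : K)) := by
  obtain ⟨ω, hω⟩ := (cls_mem_fixedJ_top_iff hp.ne_zero hσ u).mp hu
  obtain ⟨y, hy, -⟩ := exists_pow_eq_algebraMap_norm_of_apply_eq_mul_pow hn hσ hG hω
  exact ⟨y, hy⟩

theorem cls_mem_clsOf_bot_of_cls_mem_fixedJ (hp : p.Prime) (hn : n ≠ 0)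
    (hσ : ∀ τ, τ ∈ Subgroup.zpowers σ) (hG : Nat.card (K ≃ₐ[F] K) = p ^ n) (u : Kˣ)
    (hu : cls p u ∈ fixedJ p (⊤ : Subgroup (K ≃ₐ[F] K)))
    (hf : ∃ f : F, f ^ p = Algebra.norm F (u : K)) :
    cls p u ∈ clsOf p (⊥ : IntermediateField F K) := by
  obtain ⟨ω, hω⟩ := (cls_mem_fixedJ_top_iff hp.ne_zero hσ u).mp hu
  obtain ⟨f, hf⟩ := hf
  have hNω : Algebra.norm F ω = 1 := by
    refine FaithfulSMul.algebraMap_injective F K ?_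
    rw [map_one, ← algebraMap_norm_eq_of_pow_eq_algebraMap_norm hp hn hσ hG u.ne_zero hω
      (x := algebraMap F K f) (by rw [← map_pow, hf]) (by rw [AlgEquiv.commutes, mul_one])]
  have : IsCyclic (K ≃ₐ[F] K) := ⟨σ, hσ⟩
  obtain ⟨y, hy⟩ := groupCohomology.exists_div_of_norm_eq_one hσ hNω
  have hσy0 : σ (y : K) ≠ 0 := (map_ne_zero σ).mpr y.ne_zero
  obtain ⟨g, hg⟩ := mem_range_algebraMap_of_apply_eq hσ (x := u * (y : K) ^ p) (by
    rw [map_mul, map_pow, hω, ← hy, mul_assoc, ← mul_pow, div_mul_cancel₀ _ hσy0])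
  refine Subgroup.mem_map.mpr ⟨u * y ^ p, IntermediateField.mem_bot.mpr ⟨g, by simpa using hg⟩,
    (cls_eq_cls_iff _ _).mpr ⟨y⁻¹, by group⟩⟩

theorem exists_cls_mem_fixedJ_norm_eq_pow_mul_pow (hp : p.Prime) (hn : n ≠ 0)
    (hσ : ∀ τ, τ ∈ Subgroup.zpowers σ) (hG : Nat.card (K ≃ₐ[F] K) = p ^ n) {r : K} {a : F}
    (hr : r ^ p = algebraMap F K a) (hrF : r ∉ Set.range (algebraMap F K)) {ζ : F}
    (hζ : IsPrimitiveRoot ζ p) {x : K} (hx : Algebra.norm F x = ζ) :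
    ∃ u : Kˣ, cls p u ∈ fixedJ p (⊤ : Subgroup (K ≃ₐ[F] K)) ∧
      ∃ (s : ℕ) (g : F), ¬ p ∣ s ∧ Algebra.norm F (u : K) = a ^ s * g ^ p := by
  have hx0 : x ≠ 0 := by
    rintro rfl
    rw [Algebra.norm_zero] at hx
    exact hζ.ne_zero hp.ne_zero hx.symm
  have : IsCyclic (K ≃ₐ[F] K) := ⟨σ, hσ⟩
  obtain ⟨u, hu⟩ := groupCohomology.exists_div_of_norm_eq_one hσ (x := x ^ p)
    (by rw [map_pow, hx, hζ.pow_eq_one])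
  have hσu : σ u = u * x⁻¹ ^ p := by
    rw [inv_pow, ← hu, inv_div, mul_div_cancel₀ _ u.ne_zero]
  obtain ⟨z, hz, -⟩ := exists_pow_eq_algebraMap_norm_of_apply_eq_mul_pow hn hσ hG hσu
  obtain ⟨s, g, hsg⟩ := exists_eq_pow_mul_pow_of_pow_eq_algebraMap hp hσ hr hrF hz
  refine ⟨u, (cls_mem_fixedJ_top_iff hp.ne_zero hσ u).mpr ⟨x⁻¹, hσu⟩, s, g, ?_, hsg⟩
  rintro ⟨s₁, rfl⟩
  have h1 := algebraMap_norm_eq_of_pow_eq_algebraMap_norm hp hn hσ hG u.ne_zero hσu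
    (x := algebraMap F K (a ^ s₁ * g)) (d := 1)
    (by rw [← map_pow, hsg, mul_pow, ← pow_mul, mul_comm s₁ p])
    (by rw [AlgEquiv.commutes, mul_one])
  rw [Algebra.norm_inv, hx, eq_comm, map_eq_one_iff _ (FaithfulSMul.algebraMap_injective F K),
    inv_eq_one] at h1
  exact hζ.ne_one hp.one_lt h1

theorem exists_cls_mem_fixedJ_norm_eq_mul_pow (hp : p.Prime) (hn : n ≠ 0)
    (hσ : ∀ τ, τ ∈ Subgroup.zpowers σ) (hG : Nat.card (K ≃ₐ[F] K) = p ^ n) {r : K} {a : F}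
    (hr : r ^ p = algebraMap F K a) (hrF : r ∉ Set.range (algebraMap F K))
    (hζ : ∃ ζ : F, IsPrimitiveRoot ζ p ∧ ∃ x : K, Algebra.norm F x = ζ) (f : Fˣ)
    (hf : ∃ x : K, x ^ p = algebraMap F K (f : F)) :
    ∃ u : Kˣ, cls p u ∈ fixedJ p (⊤ : Subgroup (K ≃ₐ[F] K)) ∧
      ∃ g : F, Algebra.norm F (u : K) = (f : F) * g ^ p := by
  obtain ⟨ζ, hζ, x, hx⟩ := hζ
  obtain ⟨u, hu, s, g, hs, hN⟩ :=
    exists_cls_mem_fixedJ_norm_eq_pow_mul_pow hp hn hσ hG hr hrF hζ hx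
  obtain ⟨s₀, g₀, hf₀⟩ := (exists_pow_eq_algebraMap_iff hp hσ hr hrF f).mp hf
  obtain ⟨k, e, hk⟩ := exists_pow_eq_pow_mul_pow_of_not_dvd hp hs s₀ a g
  have hg₀ : g₀ ≠ 0 := by
    rintro rfl
    rw [zero_pow hp.ne_zero, mul_zero] at hf₀
    exact f.ne_zero hf₀
  refine ⟨u ^ k, ?_, e / g₀, ?_⟩
  · rw [cls, QuotientGroup.mk_pow]
    exact pow_mem hu k
  · rw [Units.val_pow_eq_pow_val, map_pow, hN, hk, hf₀, mul_assoc, ← mul_pow,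
      mul_div_cancel₀ e hg₀]

theorem exists_isPrimitiveRoot_norm_of_forall_exists_cls_mem_fixedJ (hp : p.Prime) (hn : n ≠ 0)
    (hσ : ∀ τ, τ ∈ Subgroup.zpowers σ) (hG : Nat.card (K ≃ₐ[F] K) = p ^ n) {r : K} {a : F}
    (hr : r ^ p = algebraMap F K a) (hrF : r ∉ Set.range (algebraMap F K))
    (hsurj : ∀ f : Fˣ, (∃ x : K, x ^ p = algebraMap F K (f : F)) →
      ∃ u : Kˣ, cls p u ∈ fixedJ p (⊤ : Subgroup (K ≃ₐ[F] K)) ∧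
        ∃ g : F, Algebra.norm F (u : K) = (f : F) * g ^ p) :
    ∃ ζ : F, IsPrimitiveRoot ζ p ∧ ∃ x : K, Algebra.norm F x = ζ := by
  have hr0 : r ≠ 0 := by
    rintro rfl
    exact hrF ⟨0, map_zero _⟩
  have ha : a ≠ 0 := by
    rintro rfl
    rw [map_zero, pow_eq_zero_iff hp.ne_zero] at hr
    exact hr0 hr
  obtain ⟨u, hu, g, hg⟩ := hsurj (Units.mk0 a ha) ⟨r, hr⟩
  obtain ⟨ω, hω⟩ := (cls_mem_fixedJ_top_iff hp.ne_zero hσ u).mp hu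
  have hη := isPrimitiveRoot_apply_div_self hp hσ hr hrF
  have hηω := algebraMap_norm_eq_of_pow_eq_algebraMap_norm hp hn hσ hG u.ne_zero hω
    (x := r * algebraMap F K g) (d := σ r / r)
    (by rw [mul_pow, hr, ← map_pow, ← map_mul, hg, Units.val_mk0])
    (by rw [map_mul, AlgEquiv.commutes]; field_simp)
  rw [hηω] at hη
  exact ⟨_, (IsPrimitiveRoot.map_iff_of_injective (FaithfulSMul.algebraMap_injective F K)).mp hη,
    ω, rfl⟩

end ExactSequence

/-- **Exact Sequence Lemma.** With `A = (F^× ∩ K^{×p})/F^{×p}`, the sequence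
`1 → A → F^×/F^{×p} → J^G → A` is exact (the second map induced by the inclusion
`F^× → K^×`, the third by the norm); `A = 1` if `ξ_p ∉ F`, while `A = ⟨[a]_F⟩` if
`ξ_p ∈ F`, in which case the norm map is surjective iff `ξ_p ∈ N_{K/F}(K^×)`.
In particular (i) and (ii) of the accompanying remark hold. -/
theorem statement_13
    (p n : ℕ) (hp : p.Prime) (hn : 1 ≤ n)
    (F K : Type) [Field F] [Field K] [Algebra F K]
    [FiniteDimensional F K] [IsGalois F K]
    (σ : K ≃ₐ[F] K) (hσ : ∀ τ : K ≃ₐ[F] K, τ ∈ Subgroup.zpowers σ)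
    (hG : Nat.card (K ≃ₐ[F] K) = p ^ n)
    (Ki : ℕ → IntermediateField F K)
    (hKideg : ∀ i, i ≤ n → Module.finrank F ↥(Ki i) = p ^ i)
    (a : F)
    (hKum : (∃ ζ : F, IsPrimitiveRoot ζ p) →
      ∃ r : K, r ^ p = algebraMap F K a ∧ IntermediateField.adjoin F {r} = Ki 1) :
    -- exactness at F^×/F^{×p}: the kernel of ε is A = (F^× ∩ K^{×p})/F^{×p}
    (∀ f : Fˣ, cls p (Units.map (algebraMap F K : F →* K) f) = 1 ↔
      ∃ x : K, x ^ p = algebraMap F K (f : F)) ∧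
    -- ε takes values in J^G
    (∀ f : Fˣ, cls p (Units.map (algebraMap F K : F →* K) f) ∈
      fixedJ p (⊤ : Subgroup (K ≃ₐ[F] K))) ∧
    -- the norm map sends J^G into A, i.e. norms of fixed classes lie in F^× ∩ K^{×p}
    (∀ u : Kˣ, cls p u ∈ fixedJ p (⊤ : Subgroup (K ≃ₐ[F] K)) →
      ∃ x : K, x ^ p = algebraMap F K (Algebra.norm F (u : K))) ∧
    -- (i) if [β] ∈ [F^×] then [N_{K/F}(β)]_F = [1]_F
    (∀ u : Kˣ, cls p u ∈ clsOf p (⊥ : IntermediateField F K) →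
      ∃ f : F, f ^ p = Algebra.norm F (u : K)) ∧
    -- (ii) exactness at J^G: a fixed class with trivial norm class lies in [F^×]
    (∀ u : Kˣ, cls p u ∈ fixedJ p (⊤ : Subgroup (K ≃ₐ[F] K)) →
      (∃ f : F, f ^ p = Algebra.norm F (u : K)) →
      cls p u ∈ clsOf p (⊥ : IntermediateField F K)) ∧
    -- if ξ_p ∉ F then A = 1
    ((¬ ∃ ζ : F, IsPrimitiveRoot ζ p) →
      ∀ f : F, (∃ x : K, x ^ p = algebraMap F K f) → ∃ g : F, g ^ p = f) ∧
    -- if ξ_p ∈ F then A = ⟨[a]_F⟩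
    ((∃ ζ : F, IsPrimitiveRoot ζ p) →
      ∀ f : Fˣ, ((∃ x : K, x ^ p = algebraMap F K (f : F)) ↔
        ∃ (s : ℕ) (g : F), (f : F) = a ^ s * g ^ p)) ∧
    -- and then N : J^G → A is surjective iff ξ_p ∈ N_{K/F}(K^×)
    ((∃ ζ : F, IsPrimitiveRoot ζ p) →
      ((∃ ζ : F, IsPrimitiveRoot ζ p ∧ ∃ x : K, Algebra.norm F x = ζ) ↔
        ∀ f : Fˣ, (∃ x : K, x ^ p = algebraMap F K (f : F)) →
          ∃ u : Kˣ, cls p u ∈ fixedJ p (⊤ : Subgroup (K ≃ₐ[F] K)) ∧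
            ∃ g : F, Algebra.norm F (u : K) = (f : F) * g ^ p)) := by
  have hn0 : n ≠ 0 := Nat.one_le_iff_ne_zero.mp hn
  have hKummer : (∃ ζ : F, IsPrimitiveRoot ζ p) →
      ∃ r : K, r ^ p = algebraMap F K a ∧ r ∉ Set.range (algebraMap F K) := fun hζ => by
    obtain ⟨r, hr, hadj⟩ := hKum hζ
    refine ⟨r, hr, fun hrF => hp.one_lt.ne' ?_⟩
    have hdeg := hKideg 1 hn
    rw [← hadj, pow_one, IntermediateField.finrank_adjoin_simple_eq_one_iff.mpr
      (IntermediateField.mem_bot.mpr hrF)] at hdeg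
    exact hdeg.symm
  refine ⟨cls_map_algebraMap_eq_one_iff hp.ne_zero, cls_map_algebraMap_mem_fixedJ,
    exists_pow_eq_algebraMap_norm_of_cls_mem_fixedJ hp hn0 hσ hG,
    exists_pow_eq_norm_of_cls_mem_clsOf_bot ?_, cls_mem_clsOf_bot_of_cls_mem_fixedJ hp hn0 hσ hG,
    fun hF _ ⟨_, hx⟩ => exists_pow_eq_of_forall_not_isPrimitiveRoot hp hσ hG (not_exists.mp hF) hx,
    fun hζ f => ?_, fun hζ => ?_⟩
  · rw [← IsGalois.card_aut_eq_finrank, hG]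
    exact dvd_pow_self p hn0
  · obtain ⟨r, hr, hrF⟩ := hKummer hζ
    exact exists_pow_eq_algebraMap_iff hp hσ hr hrF f
  · obtain ⟨r, hr, hrF⟩ := hKummer hζ
    exact ⟨exists_cls_mem_fixedJ_norm_eq_mul_pow hp hn0 hσ hG hr hrF,
      exists_isPrimitiveRoot_norm_of_forall_exists_cls_mem_fixedJ hp hn0 hσ hG hr hrF⟩

end PC
end
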